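/- arXiv:1211.2456 — 9 statements merged into one kernel-verified Lean document; each statement's English description precedes it below -/
import Mathlib

section
/- Let M₁, …, M_d be matroids on the same finite ground set E with rank functions r₁, …, r_d, and let W : E → ℕ be a weight function. Then there exists a W-covering V₁, …, V_d of E such that V_i is independent in M_i for every i ∈ {1, …, d}, if and only if for every subset A ⊆ E one has r₁(A) + r₂(A) + ⋯ + r_d(A) ≥ Σ_{e∈A} W(e). -/
/-!
Necessity is double counting: if the `V i` form an independent `W`-covering, then
`∑_{e ∈ A} W e = ∑ i, |A ∩ V i| ≤ ∑ i, r_i(A)`.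

Sufficiency is by induction on `∑_{e ∈ E} W e`. Fix `e` with `W e > 0` and call `A` tight when
`∑ i, r_i(A) ≤ ∑_{x ∈ A} W x`. By submodularity, and the rank condition at `A ∩ B`, tight sets
are closed under unions. If every `M i` had a tight set `A i ∌ e` spanning `e`, the union `U` of
these would span `e` in every `M i`, and the rank condition would fail at `insert e U`. Hence
some `M i` has no such set; then `e` is a nonloop of `M i`, and contracting `e` in `M i` while
lowering `W e` by one preserves the rank condition. A covering of the smaller instance becomes
one of the original instance after adding `e` to `V i`.
-/

/-- The rank of a set `A` in a matroid `M`: the maximum cardinality of an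
independent subset of `A`. -/
noncomputable def matroidRank {α : Type*} (M : Matroid α) (A : Set α) : ℕ :=
  sSup {n | ∃ I, M.Indep I ∧ I ⊆ A ∧ I.ncard = n}

section

open Set Function Matroid

variable {α : Type*} {A B I : Set α} {e : α}

section Rank

variable {M : Matroid α}

namespace Matroid

lemma Indep.ncard_le_matroidRank (hI : M.Indep I) (hIA : I ⊆ A) (hA : A.Finite) :
    I.ncard ≤ matroidRank M A :=
  le_csSup ⟨A.ncard, by rintro n ⟨J, -, hJA, rfl⟩; exact ncard_le_ncard hJA hA⟩ ⟨I, hI, hIA, rfl⟩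

lemma IsRkFinite.cast_matroidRank (h : M.IsRkFinite A) : (matroidRank M A : ℕ∞) = M.eRk A := by
  obtain ⟨I, hI, hIfin⟩ := h.exists_finite_isBasis'
  have hle : ∀ J, M.Indep J → J ⊆ A → J.ncard ≤ I.ncard := fun J hJ hJA => by
    have hJfin := h.finite_of_indep_subset hJ hJA
    have := hJ.encard_le_eRk_of_subset hJA
    rw [← hI.encard_eq_eRk, ← hJfin.cast_ncard_eq, ← hIfin.cast_ncard_eq] at this
    exact_mod_cast this
  have hrank : matroidRank M A = I.ncard :=
    le_antisymm (csSup_le ⟨0, ∅, M.empty_indep, empty_subset A, ncard_empty α⟩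
      (by rintro n ⟨J, hJ, hJA, rfl⟩; exact hle J hJ hJA))
      (le_csSup ⟨I.ncard, by rintro n ⟨J, hJ, hJA, rfl⟩; exact hle J hJ hJA⟩
        ⟨I, hI.indep, hI.subset, rfl⟩)
  rw [hrank, hIfin.cast_ncard_eq, hI.encard_eq_eRk]

lemma cast_matroidRank [M.RankFinite] (A : Set α) : (matroidRank M A : ℕ∞) = M.eRk A :=
  (M.isRkFinite_set A).cast_matroidRank

end Matroid

section RankFinite

variable [M.RankFinite]

@[simp] lemma matroidRank_empty : matroidRank M ∅ = 0 := by
  exact_mod_cast (cast_matroidRank (M := M) ∅).trans M.eRk_empty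

lemma matroidRank_mono (hAB : A ⊆ B) : matroidRank M A ≤ matroidRank M B := by
  exact_mod_cast (cast_matroidRank A).trans_le ((M.eRk_mono hAB).trans_eq (cast_matroidRank B).symm)

lemma matroidRank_inter_add_matroidRank_union_le (A B : Set α) :
    matroidRank M (A ∩ B) + matroidRank M (A ∪ B) ≤ matroidRank M A + matroidRank M B := by
  have := M.eRk_inter_add_eRk_union_le A B
  simp only [← cast_matroidRank] at this
  exact_mod_cast this

lemma matroidRank_singleton_eq_zero (he : ¬ M.IsNonloop e) : matroidRank M {e} = 0 := by
  have h1 := M.eRk_singleton_le e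
  have h2 : M.eRk {e} ≠ 1 := mt eRk_singleton_eq_one_iff.mp he
  rw [← cast_matroidRank] at h1 h2
  norm_cast at h1 h2
  omega

lemma matroidRank_insert_eq_of_subset (hAB : A ⊆ B)
    (h : matroidRank M (insert e A) = matroidRank M A) :
    matroidRank M (insert e B) = matroidRank M B := by
  have hsub := matroidRank_inter_add_matroidRank_union_le (M := M) (insert e A) B
  rw [insert_union, union_eq_self_of_subset_left hAB] at hsub
  have := matroidRank_mono (M := M) (subset_inter (subset_insert e A) hAB)
  have := matroidRank_mono (M := M) (subset_insert e B)
  omega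

lemma Matroid.IsNonloop.matroidRank_contractElem_add_one (he : M.IsNonloop e) (A : Set α) :
    matroidRank (M ／ {e}) A + 1 = matroidRank M (insert e A) := by
  obtain ⟨J, hJ, heJ⟩ :=
    he.indep.subset_isBasis'_of_subset (singleton_subset_iff.2 (mem_insert e A))
  have hcon := hJ.contract_isBasis'_sdiff_of_subset heJ
  have key : (M ／ {e}).eRk A + 1 = M.eRk (insert e A) := by
    rw [← eRk_insert_of_notMem_ground A (M := M ／ {e}) (fun h => h.2 rfl), hcon.eRk_eq_encard,
      hJ.eRk_eq_encard, encard_sdiff_singleton_add_one (singleton_subset_iff.1 heJ)]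
  rw [← cast_matroidRank, ← cast_matroidRank] at key
  exact_mod_cast key

end RankFinite

end Rank

lemma finsum_mem_ncard_setOf_mem_eq_sum_ncard_inter {ι : Type*} [Fintype ι] (V : ι → Set α)
    (hA : A.Finite) : ∑ᶠ e ∈ A, {i | e ∈ V i}.ncard = ∑ i, (A ∩ V i).ncard := by
  classical
  rw [finsum_mem_eq_finite_toFinset_sum _ hA]
  convert Finset.sum_card_bipartiteAbove_eq_sum_card_bipartiteBelow (fun e i => e ∈ V i)
    using 2 with e - i -
  · rw [← ncard_coe_finset]; simp [Finset.bipartiteAbove]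
  · rw [← ncard_coe_finset]; simp [Finset.bipartiteBelow]

lemma finsum_mem_update_pred_add_one [DecidableEq α] {W : α → ℕ} (hA : A.Finite) (he : e ∈ A)
    (hWe : W e ≠ 0) :
    ∑ᶠ x ∈ A, update W e (W e - 1) x + 1 = ∑ᶠ x ∈ A, W x := by
  have he' : e ∉ A \ {e} := fun h => h.2 rfl
  rw [← insert_sdiff_self_of_mem he, finsum_mem_insert _ he' hA.sdiff,
    finsum_mem_insert _ he' hA.sdiff, update_self,
    finsum_mem_congr (g := W) rfl fun x hx => update_of_ne hx.2 _ _]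
  omega

lemma sum_matroidRank_update_add {ι : Type*} [Fintype ι] [DecidableEq ι] (M : ι → Matroid α)
    (i : ι) (N : Matroid α) (A : Set α) :
    ∑ j, matroidRank (update M i N j) A + matroidRank (M i) A =
      ∑ j, matroidRank (M j) A + matroidRank N A := by
  simp_rw [apply_update (fun _ N => matroidRank N A)]
  rw [Finset.sum_update_of_mem (Finset.mem_univ i),
    Finset.sum_eq_add_sum_sdiff_singleton_of_mem (Finset.mem_univ i) fun j => matroidRank (M j) A]
  ring

section Family

variable {ι : Type*} {E X Y : Set α} {M : ι → Matroid α} {W : α → ℕ}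

lemma exists_indep_covering_of_contract [Finite ι] [DecidableEq α] [DecidableEq ι] {i : ι}
    {V : ι → Set α} (he : (M i).IsNonloop e) (hWe : W e ≠ 0)
    (hV : ∀ j, (update M i (M i ／ {e}) j).Indep (V j))
    (hVW : ∀ x ∈ E, {j | x ∈ V j}.ncard = update W e (W e - 1) x) :
    ∃ V : ι → Set α, (∀ j, (M j).Indep (V j)) ∧ ∀ x ∈ E, {j | x ∈ V j}.ncard = W x := by
  have hVi := hV i
  rw [update_self, he.contractElem_indep_iff] at hVi
  refine ⟨update V i (insert e (V i)), fun j => ?_, fun x hx => ?_⟩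
  · rcases eq_or_ne j i with rfl | hj
    · simpa using hVi.2
    · simpa [update_of_ne hj] using hV j
  · rcases eq_or_ne x e with rfl | hxe
    · have : {j | x ∈ update V i (insert x (V i)) j} = insert i {j | x ∈ V j} := by
        ext j; rcases eq_or_ne j i with rfl | hj <;> simp [*]
      rw [this, ncard_insert_of_notMem (s := {j | x ∈ V j}) hVi.1, hVW x hx, update_self]
      omega
    · have : {j | x ∈ update V i (insert e (V i)) j} = {j | x ∈ V j} := by
        ext j; rcases eq_or_ne j i with rfl | hj <;> simp [*]
      rw [this, hVW x hx, update_of_ne hxe]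

variable [Fintype ι]

theorem sum_le_sum_matroidRank_of_indep {V : ι → Set α} (hV : ∀ i, (M i).Indep (V i))
    (hVW : ∀ e ∈ E, {i | e ∈ V i}.ncard = W e) {A : Set α} (hAE : A ⊆ E) (hA : A.Finite) :
    ∑ᶠ e ∈ A, W e ≤ ∑ i, matroidRank (M i) A := by
  rw [← finsum_mem_congr rfl fun e he => hVW e (hAE he),
    finsum_mem_ncard_setOf_mem_eq_sum_ncard_inter V hA]
  exact Finset.sum_le_sum fun i _ =>
    ((hV i).subset inter_subset_right).ncard_le_matroidRank inter_subset_left hA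

/-- Under the rank condition `∑ᶠ e ∈ A, W e ≤ ∑ i, matroidRank (M i) A` this is an equality. -/
def IsTight (M : ι → Matroid α) (W : α → ℕ) (A : Set α) : Prop :=
  ∑ i, matroidRank (M i) A ≤ ∑ᶠ e ∈ A, W e

variable [∀ i, (M i).RankFinite]

lemma IsTight.union (hE : E.Finite)
    (hcond : ∀ A ⊆ E, ∑ᶠ e ∈ A, W e ≤ ∑ i, matroidRank (M i) A) (hXE : X ⊆ E) (hYE : Y ⊆ E)
    (hX : IsTight M W X) (hY : IsTight M W Y) : IsTight M W (X ∪ Y) := by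
  have hsub : ∑ i, (matroidRank (M i) (X ∩ Y) + matroidRank (M i) (X ∪ Y)) ≤
      ∑ i, (matroidRank (M i) X + matroidRank (M i) Y) :=
    Finset.sum_le_sum fun i _ => matroidRank_inter_add_matroidRank_union_le X Y
  rw [Finset.sum_add_distrib, Finset.sum_add_distrib] at hsub
  have hW := finsum_mem_union_inter (f := W) (hE.subset hXE) (hE.subset hYE)
  have hXY := hcond (X ∩ Y) (inter_subset_left.trans hXE)
  unfold IsTight at *
  omega

lemma isTight_iUnion (hE : E.Finite)
    (hcond : ∀ A ⊆ E, ∑ᶠ e ∈ A, W e ≤ ∑ i, matroidRank (M i) A) {A : ι → Set α}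
    (hAE : ∀ i, A i ⊆ E) (hA : ∀ i, IsTight M W (A i)) : IsTight M W (⋃ i, A i) := by
  classical
  suffices ∀ s : Finset ι, IsTight M W (⋃ i ∈ s, A i) by simpa using this Finset.univ
  intro s
  induction s using Finset.induction_on with
  | empty => simp [IsTight]
  | insert a s _ ih =>
    rw [Finset.set_biUnion_insert]
    exact (hA a).union hE hcond (hAE a) (iUnion₂_subset fun i _ => hAE i) ih

lemma exists_forall_isTight_matroidRank_lt_insert (hE : E.Finite)
    (hcond : ∀ A ⊆ E, ∑ᶠ e ∈ A, W e ≤ ∑ i, matroidRank (M i) A) {e : α} (heE : e ∈ E)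
    (hWe : W e ≠ 0) :
    ∃ i, ∀ A ⊆ E, e ∉ A → IsTight M W A →
      matroidRank (M i) A < matroidRank (M i) (insert e A) := by
  by_contra! h
  choose A hAE heA hA hAe using h
  set U := ⋃ i, A i
  have hUE : U ⊆ E := iUnion_subset hAE
  have heU : e ∉ U := by simpa [U] using heA
  have hspan : ∀ i, matroidRank (M i) (insert e U) = matroidRank (M i) U := fun i =>
    matroidRank_insert_eq_of_subset (subset_iUnion A i)
      (le_antisymm (hAe i) (matroidRank_mono (subset_insert e _)))
  have hU : IsTight M W U := isTight_iUnion hE hcond hAE hA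
  have := hcond _ (insert_subset heE hUE)
  rw [finsum_mem_insert _ heU (hE.subset hUE), Finset.sum_congr rfl fun i _ => hspan i] at this
  unfold IsTight at hU
  omega

lemma exists_isNonloop_forall_sum_le_contract [DecidableEq α] [DecidableEq ι] (hE : E.Finite)
    (hcond : ∀ A ⊆ E, ∑ᶠ e ∈ A, W e ≤ ∑ i, matroidRank (M i) A) (heE : e ∈ E) (hWe : W e ≠ 0) :
    ∃ i, (M i).IsNonloop e ∧ ∀ A ⊆ E,
      ∑ᶠ x ∈ A, update W e (W e - 1) x ≤ ∑ j, matroidRank (update M i (M i ／ {e}) j) A := by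
  obtain ⟨i, hi⟩ := exists_forall_isTight_matroidRank_lt_insert hE hcond heE hWe
  have he : (M i).IsNonloop e := by
    by_contra he
    have := hi ∅ (empty_subset E) (notMem_empty e) (by simp [IsTight])
    rw [insert_empty_eq, matroidRank_singleton_eq_zero he] at this
    exact Nat.not_lt_zero _ this
  refine ⟨i, he, fun A hAE => ?_⟩
  have hsum := sum_matroidRank_update_add M i (M i ／ {e}) A
  have hcon := he.matroidRank_contractElem_add_one A
  have hmono := matroidRank_mono (M := M i) (subset_insert e A)
  have hA := hcond A hAE
  by_cases heA : e ∈ A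
  · have := finsum_mem_update_pred_add_one (hE.subset hAE) heA hWe
    rw [insert_eq_of_mem heA] at hcon
    omega
  · rw [finsum_mem_congr (g := W) rfl fun x hx => update_of_ne (ne_of_mem_of_not_mem hx heA) _ _]
    by_cases htight : IsTight M W A
    · have := hi A hAE heA htight
      omega
    · unfold IsTight at htight
      omega

theorem exists_indep_covering_of_forall_sum_le (hE : E.Finite)
    (hcond : ∀ A ⊆ E, ∑ᶠ e ∈ A, W e ≤ ∑ i, matroidRank (M i) A) :
    ∃ V : ι → Set α, (∀ i, (M i).Indep (V i)) ∧ ∀ e ∈ E, {i | e ∈ V i}.ncard = W e := by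
  classical
  induction hn : ∑ᶠ e ∈ E, W e using Nat.strong_induction_on generalizing W M with
  | _ n ih =>
    by_cases hW : ∀ e ∈ E, W e = 0
    · exact ⟨fun _ => ∅, fun i => (M i).empty_indep, fun e he => by simp [hW e he]⟩
    push Not at hW
    obtain ⟨e, heE, hWe⟩ := hW
    obtain ⟨i, he, hcond'⟩ := exists_isNonloop_forall_sum_le_contract hE hcond heE hWe
    have : ∀ j, (update M i (M i ／ {e}) j).RankFinite := fun j => by
      rw [update_apply]; split_ifs <;> infer_instance
    have hlt := finsum_mem_update_pred_add_one hE heE hWe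
    obtain ⟨V, hV, hVW⟩ := ih _ (by omega) hcond' rfl
    exact exists_indep_covering_of_contract he hWe hV hVW

end Family

end

/-- **Weighted matroid union (Lemma 2).** Matroids `M₁, …, M_d` on a common finite
ground set `E` admit a `W`-covering `V₁, …, V_d` of `E` with `V_i` independent in `M_i`
iff `r₁(A) + ⋯ + r_d(A) ≥ Σ_{e ∈ A} W(e)` for every `A ⊆ E`. -/
theorem wCovering_iff_rank_sum {α : Type*} (E : Set α) (hE : E.Finite) (d : ℕ)
    (M : Fin d → Matroid α) (hME : ∀ i, (M i).E = E) (W : α → ℕ) :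
    (∃ V : Fin d → Set α, (∀ i, (M i).Indep (V i)) ∧
        ∀ e ∈ E, {i : Fin d | e ∈ V i}.ncard = W e) ↔
      ∀ A ⊆ E, ∑ᶠ e ∈ A, W e ≤ ∑ i : Fin d, matroidRank (M i) A := by
  refine ⟨fun ⟨V, hV, hVW⟩ A hAE => sum_le_sum_matroidRank_of_indep hV hVW hAE (hE.subset hAE),
    fun hcond => ?_⟩
  have : ∀ i, (M i).Finite := fun i => ⟨hME i ▸ hE⟩
  exact exists_indep_covering_of_forall_sum_le hE hcond
end

section
/- (Seymour) Let M be a matroid on a finite ground set E whose ground set can be partitioned into k independent sets. Then for every list assignment L on E with |L(e)| = k for all e ∈ E, there exists a proper coloring of M from the lists L. In other words, the choice number of a loopless matroid equals its chromatic number. -/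
/-!
Rado's criterion: if every `Y ⊆ E` satisfies `|Y| ≤ ∑ᵢ r {e ∈ Y | i ∈ ℓ e}`, then `M` has a
proper colouring from the lists `ℓ`. Induct on the total length of the lists. If some list `ℓ e₀`
contains colours `x ≠ y`, then deleting `x` or deleting `y` from it preserves the condition:
violating sets `Y₁`, `Y₂` for the two deletions must both contain `e₀`, and submodularity of the
rank, colour by colour, bounds the sums for `Y₁ ∪ Y₂` and `(Y₁ ∩ Y₂) \ {e₀}` under `ℓ` by those
for `Y₁` and `Y₂`, contradicting the condition for `ℓ`. Once all lists are singletons, the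
condition says that each colour class `Z` has `|Z| ≤ r Z`, i.e. is independent.

If `E` is covered by `k` independent sets then `|Z| ≤ k · r Z` for every `Z`, and when all lists
have size `k`, double counting gives `k |Y| = ∑ᵢ |{e ∈ Y | i ∈ ℓ e}| ≤ k ∑ᵢ r {e ∈ Y | i ∈ ℓ e}`,
which is Rado's condition.
-/

open Set Function

namespace Matroid

variable {α : Type*} {M : Matroid α} {C : Finset ℕ} {ℓ ℓ' : α → Finset ℕ} {c : α → ℕ}
  {Y Y₁ Y₂ : Set α} {e₀ : α} {x y z : ℕ} {k : ℕ}

def IsListColoring (M : Matroid α) (ℓ : α → Finset ℕ) (c : α → ℕ) : Prop :=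
  (∀ e ∈ M.E, c e ∈ ℓ e) ∧ ∀ i, M.Indep {e ∈ M.E | c e = i}

lemma IsListColoring.mono (hc : M.IsListColoring ℓ' c) (h : ∀ e, ℓ' e ⊆ ℓ e) :
    M.IsListColoring ℓ c :=
  ⟨fun e he => h e (hc.1 e he), hc.2⟩

noncomputable def listRkSum (M : Matroid α) (C : Finset ℕ) (ℓ : α → Finset ℕ) (Y : Set α) : ℕ∞ :=
  ∑ i ∈ C, M.eRk {e ∈ Y | i ∈ ℓ e}

def RadoCondition (M : Matroid α) (C : Finset ℕ) (ℓ : α → Finset ℕ) : Prop :=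
  ∀ Y ⊆ M.E, Y.encard ≤ M.listRkSum C ℓ Y

lemma RadoCondition.nonempty (h : M.RadoCondition C ℓ) {e : α} (he : e ∈ M.E) :
    (ℓ e).Nonempty := by
  by_contra hemp
  have hempty : ∀ i, {e' ∈ ({e} : Set α) | i ∈ ℓ e'} = ∅ := fun i => by
    ext e'
    simp +contextual [Finset.not_nonempty_iff_eq_empty.1 hemp]
  have := h {e} (singleton_subset_iff.2 he)
  simp only [listRkSum, hempty, eRk_empty, Finset.sum_const_zero, encard_singleton] at this
  exact one_ne_zero (nonpos_iff_eq_zero.1 this)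

lemma RadoCondition.indep_of_eq_singleton (h : M.RadoCondition C ℓ) (hE : M.E.Finite)
    (hc : ∀ e ∈ M.E, ℓ e = {c e}) (i : ℕ) : M.Indep {e ∈ M.E | c e = i} := by
  set Z := {e ∈ M.E | c e = i}
  have hZE : Z ⊆ M.E := sep_subset _ _
  have hterm : ∀ j, M.eRk {e ∈ Z | j ∈ ℓ e} = if i = j then M.eRk Z else 0 := by
    intro j
    split_ifs with hij
    · congr 1
      ext e
      simp +contextual [Z, hc, hij]
    · convert M.eRk_empty
      ext e
      simp +contextual [Z, hc, Ne.symm hij]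
  refine (M.isRkFinite_of_finite (hE.subset hZE)).indep_of_encard_le_eRk ?_
  calc Z.encard ≤ M.listRkSum C ℓ Z := h Z hZE
    _ = if i ∈ C then M.eRk Z else 0 := by simp only [listRkSum, hterm, Finset.sum_ite_eq]
    _ ≤ M.eRk Z := by split_ifs <;> simp

lemma RadoCondition.exists_isListColoring_of_card_le_one (h : M.RadoCondition C ℓ)
    (hE : M.E.Finite) (hℓ : ∀ e ∈ M.E, (ℓ e).card ≤ 1) : ∃ c, M.IsListColoring ℓ c := by
  have : ∀ e ∈ M.E, ∃ i, ℓ e = {i} := fun e he =>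
    Finset.card_eq_one.1 ((hℓ e he).antisymm (h.nonempty he).card_pos)
  choose! c hc using this
  exact ⟨c, fun e he => by simp [hc e he], h.indep_of_eq_singleton hE hc⟩

section update

variable [DecidableEq α]

lemma listRkSum_update_of_notMem (he₀ : e₀ ∉ Y) (s : Finset ℕ) :
    M.listRkSum C (update ℓ e₀ s) Y = M.listRkSum C ℓ Y := by
  refine Finset.sum_congr rfl fun i _ => ?_
  congr 1
  ext e
  simp only [mem_ofPred_eq, and_congr_right_iff]
  intro he
  rw [update_of_ne (ne_of_mem_of_not_mem he he₀)]

lemma listRkSum_union_add_listRkSum_sdiff_le (hxy : x ≠ y) (h₁ : e₀ ∈ Y₁) (h₂ : e₀ ∈ Y₂) :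
    M.listRkSum C ℓ (Y₁ ∪ Y₂) + M.listRkSum C ℓ ((Y₁ ∩ Y₂) \ {e₀}) ≤
      M.listRkSum C (update ℓ e₀ ((ℓ e₀).erase x)) Y₁ +
        M.listRkSum C (update ℓ e₀ ((ℓ e₀).erase y)) Y₂ := by
  simp only [listRkSum, ← Finset.sum_add_distrib]
  refine Finset.sum_le_sum fun i _ => ?_
  set A := {e ∈ Y₁ | i ∈ update ℓ e₀ ((ℓ e₀).erase x) e}
  set B := {e ∈ Y₂ | i ∈ update ℓ e₀ ((ℓ e₀).erase y) e}
  have hU : {e ∈ Y₁ ∪ Y₂ | i ∈ ℓ e} ⊆ A ∪ B := by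
    rintro e ⟨he | he, hi⟩ <;> by_cases he₀ : e = e₀ <;> by_cases hix : i = x <;>
      simp_all [A, B, update_apply]
  have hW : {e ∈ (Y₁ ∩ Y₂) \ {e₀} | i ∈ ℓ e} ⊆ A ∩ B := by
    rintro e ⟨⟨⟨he₁, he₂⟩, he₀⟩, hi⟩
    simp_all [A, B, update_apply]
  calc M.eRk {e ∈ Y₁ ∪ Y₂ | i ∈ ℓ e} + M.eRk {e ∈ (Y₁ ∩ Y₂) \ {e₀} | i ∈ ℓ e}
      ≤ M.eRk (A ∪ B) + M.eRk (A ∩ B) := add_le_add (M.eRk_mono hU) (M.eRk_mono hW)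
    _ ≤ M.eRk A + M.eRk B := by rw [add_comm]; exact M.eRk_inter_add_eRk_union_le A B

lemma RadoCondition.update_erase_or (h : M.RadoCondition C ℓ) (hE : M.E.Finite) (hxy : x ≠ y)
    (e₀ : α) : M.RadoCondition C (update ℓ e₀ ((ℓ e₀).erase x)) ∨
      M.RadoCondition C (update ℓ e₀ ((ℓ e₀).erase y)) := by
  by_contra! hcon
  simp only [RadoCondition, not_forall, not_le, exists_prop] at hcon
  obtain ⟨⟨Y₁, hY₁E, hY₁⟩, ⟨Y₂, hY₂E, hY₂⟩⟩ := hcon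
  have mem_of_violated {Y : Set α} {s : Finset ℕ} (hYE : Y ⊆ M.E)
      (hY : M.listRkSum C (update ℓ e₀ s) Y < Y.encard) : e₀ ∈ Y := by
    by_contra he₀
    rw [listRkSum_update_of_notMem he₀] at hY
    exact (h Y hYE).not_gt hY
  have h₁ := mem_of_violated hY₁E hY₁
  have h₂ := mem_of_violated hY₂E hY₂
  have key : Y₁.encard + Y₂.encard ≤
      M.listRkSum C (update ℓ e₀ ((ℓ e₀).erase x)) Y₁ +
        M.listRkSum C (update ℓ e₀ ((ℓ e₀).erase y)) Y₂ + 1 :=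
    calc Y₁.encard + Y₂.encard = (Y₁ ∪ Y₂).encard + ((Y₁ ∩ Y₂) \ {e₀}).encard + 1 := by
          rw [add_assoc, encard_sdiff_singleton_add_one (show e₀ ∈ Y₁ ∩ Y₂ from ⟨h₁, h₂⟩),
            encard_union_add_encard_inter]
      _ ≤ M.listRkSum C ℓ (Y₁ ∪ Y₂) + M.listRkSum C ℓ ((Y₁ ∩ Y₂) \ {e₀}) + 1 := by
          gcongr
          · exact h _ (union_subset hY₁E hY₂E)
          · exact h _ (sdiff_subset.trans (inter_subset_left.trans hY₁E))
      _ ≤ _ := by gcongr ?_ + _; exact listRkSum_union_add_listRkSum_sdiff_le hxy h₁ h₂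
  lift Y₁.encard to ℕ using (hE.subset hY₁E).encard_lt_top.ne with n₁
  lift Y₂.encard to ℕ using (hE.subset hY₂E).encard_lt_top.ne with n₂
  lift M.listRkSum C (update ℓ e₀ ((ℓ e₀).erase x)) Y₁ to ℕ using (hY₁.trans_le le_top).ne
    with r₁
  lift M.listRkSum C (update ℓ e₀ ((ℓ e₀).erase y)) Y₂ to ℕ using (hY₂.trans_le le_top).ne
    with r₂
  norm_cast at hY₁ hY₂ key
  omega

lemma update_erase_subset (ℓ : α → Finset ℕ) (e₀ : α) (z : ℕ) (e : α) :
    update ℓ e₀ ((ℓ e₀).erase z) e ⊆ ℓ e := by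
  rcases eq_or_ne e e₀ with rfl | he
  · simpa using Finset.erase_subset z (ℓ e)
  · simp [he]

lemma sum_card_update_erase_lt {s : Finset α} (he₀ : e₀ ∈ s) (hz : z ∈ ℓ e₀) :
    ∑ e ∈ s, (update ℓ e₀ ((ℓ e₀).erase z) e).card < ∑ e ∈ s, (ℓ e).card :=
  Finset.sum_lt_sum (fun e _ => Finset.card_le_card (update_erase_subset ℓ e₀ z e))
    ⟨e₀, he₀, by simpa using Finset.card_erase_lt_of_mem hz⟩

end update

theorem RadoCondition.exists_isListColoring (h : M.RadoCondition C ℓ) (hE : M.E.Finite) :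
    ∃ c, M.IsListColoring ℓ c := by
  classical
  induction hn : ∑ e ∈ hE.toFinset, (ℓ e).card using Nat.strong_induction_on generalizing ℓ
    with | _ n IH =>
  by_cases hℓ : ∀ e ∈ M.E, (ℓ e).card ≤ 1
  · exact h.exists_isListColoring_of_card_le_one hE hℓ
  push Not at hℓ
  obtain ⟨e₀, he₀, hcard⟩ := hℓ
  obtain ⟨x, hx, y, hy, hxy⟩ := Finset.one_lt_card.1 hcard
  have of_erase {z : ℕ} (hz : z ∈ ℓ e₀)
      (hz' : M.RadoCondition C (update ℓ e₀ ((ℓ e₀).erase z))) : ∃ c, M.IsListColoring ℓ c := by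
    obtain ⟨c, hc⟩ := IH _ (hn ▸ sum_card_update_erase_lt (hE.mem_toFinset.2 he₀) hz) hz' rfl
    exact ⟨c, hc.mono (update_erase_subset ℓ e₀ z)⟩
  exact (h.update_erase_or hE hxy e₀).elim (of_erase hx) (of_erase hy)

lemma encard_le_card_mul_eRk {ι : Type*} [Fintype ι] {I : ι → Set α} (hI : ∀ i, M.Indep (I i))
    {Z : Set α} (hZ : Z ⊆ ⋃ i, I i) : Z.encard ≤ Fintype.card ι * M.eRk Z :=
  calc Z.encard = (⋃ i, Z ∩ I i).encard := by rw [← inter_iUnion, inter_eq_left.2 hZ]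
    _ ≤ ∑ i, (Z ∩ I i).encard := encard_iUnion_le_of_fintype _
    _ ≤ ∑ _i : ι, M.eRk Z := Finset.sum_le_sum fun i _ =>
        ((hI i).subset inter_subset_right).encard_le_eRk_of_subset inter_subset_left
    _ = Fintype.card ι * M.eRk Z := by simp

lemma sum_encard_sep_mem_eq (hY : Y.Finite) (hℓ : ∀ e ∈ Y, (ℓ e).card = k)
    (hC : ∀ e ∈ Y, ℓ e ⊆ C) : ∑ i ∈ C, {e ∈ Y | i ∈ ℓ e}.encard = k * Y.encard := by
  lift Y to Finset α using hY
  have hfilter : ∀ i, {e ∈ (Y : Set α) | i ∈ ℓ e} = ↑(Y.filter (i ∈ ℓ ·)) := fun i => by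
    ext; simp
  simp only [hfilter, encard_coe_eq_coe_finsetCard]
  norm_cast
  simp only [Finset.card_filter]
  rw [Finset.sum_comm, mul_comm, ← smul_eq_mul, ← Finset.sum_const]
  refine Finset.sum_congr rfl fun e he => ?_
  rw [← Finset.card_filter, Finset.filter_mem_eq_inter, Finset.inter_eq_right.2 (hC e he), hℓ e he]

lemma radoCondition_of_encard_le_mul_eRk (hE : M.E.Finite)
    (hM : ∀ Z ⊆ M.E, Z.encard ≤ k * M.eRk Z) (hℓ : ∀ e ∈ M.E, (ℓ e).card = k)
    (hC : ∀ e ∈ M.E, ℓ e ⊆ C) : M.RadoCondition C ℓ := by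
  intro Y hY
  rcases eq_or_ne k 0 with rfl | hk
  · simp [show Y = ∅ by simpa using hM Y hY]
  rw [← ENat.mul_le_mul_left_iff (a := k) (by exact_mod_cast hk) (ENat.natCast_ne_top k)]
  calc k * Y.encard = ∑ i ∈ C, {e ∈ Y | i ∈ ℓ e}.encard :=
        (sum_encard_sep_mem_eq (hE.subset hY) (fun e he => hℓ e (hY he))
          (fun e he => hC e (hY he))).symm
    _ ≤ ∑ i ∈ C, k * M.eRk {e ∈ Y | i ∈ ℓ e} :=
        Finset.sum_le_sum fun i _ => hM _ ((sep_subset _ _).trans hY)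
    _ = k * M.listRkSum C ℓ Y := (Finset.mul_sum _ _ _).symm

end Matroid

open Matroid

theorem matroid_choosable_of_partition_general {α : Type*} (M : Matroid α) (hE : M.E.Finite)
    (k : ℕ) (I : Fin k → Set α) (hIndep : ∀ i, M.Indep (I i))
    (hunion : ⋃ i, I i = M.E)
    (L : α → Finset ℕ) (hL : ∀ e ∈ M.E, (L e).card = k) :
    ∃ c : α → ℕ, (∀ e ∈ M.E, c e ∈ L e) ∧ ∀ i : ℕ, M.Indep {e ∈ M.E | c e = i} := by
  have hM : ∀ Z ⊆ M.E, Z.encard ≤ k * M.eRk Z := fun Z hZ => by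
    simpa using encard_le_card_mul_eRk hIndep (hZ.trans hunion.ge)
  have hC : ∀ e ∈ M.E, L e ⊆ hE.toFinset.biUnion L := fun e he =>
    Finset.subset_biUnion_of_mem L (hE.mem_toFinset.2 he)
  exact (radoCondition_of_encard_le_mul_eRk hE hM hL hC).exists_isListColoring hE

/-- **Seymour's theorem.** If the ground set of a matroid `M` can be partitioned into
`k` independent sets, then `M` has a proper coloring from every list assignment of
size `k`; i.e. the choice number of a loopless matroid equals its chromatic number. -/
theorem matroid_choosable_of_partition {α : Type*} (M : Matroid α) (hE : M.E.Finite)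
    (k : ℕ) (I : Fin k → Set α) (hIndep : ∀ i, M.Indep (I i))
    (hdisj : Pairwise (Function.onFun Disjoint I)) (hunion : ⋃ i, I i = M.E)
    (L : α → Finset ℕ) (hL : ∀ e ∈ M.E, (L e).card = k) :
    ∃ c : α → ℕ, (∀ e ∈ M.E, c e ∈ L e) ∧ ∀ i : ℕ, M.Indep {e ∈ M.E | c e = i} :=
  matroid_choosable_of_partition_general M hE k I hIndep hunion L hL
end

section
/- (Multiple basis exchange) Let B₁ and B₂ be bases of a matroid M on a finite ground set. Then for every subset A₁ ⊆ B₁ there exists a subset A₂ ⊆ B₂ such that both (B₁ \ A₁) ∪ A₂ and (B₂ \ A₂) ∪ A₁ are bases of M. -/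
/-!
Put `C₁ = B₁ \ A₁` and `C₂ = A₁`. It suffices to split `B₂ = A₂ ∪ (B₂ \ A₂)` so that `C₁ ∪ A₂`
and `A₁ ∪ (B₂ \ A₂)` both span `M`: their sizes add up to at most `|B₁| + |B₂| = 2 r(M)`, so
both are bases.

Such a split comes from a matroid-union type statement about the functions
`fᵢ X = r (X ∪ Cᵢ)`, which are monotone, submodular and grow by at most one per element: if
`f₁ S + f₂ S ≤ f₁ Y + f₂ Y + |S \ Y|` for all `Y ⊆ S`, then some `X ⊆ S` has `f₁ X = f₁ S` and
`f₂ (S \ X) = f₂ S`. This is proved by induction on `S`, for all such pairs of functions at once: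
an element `e ∈ S` is contracted into `f₁` or into `f₂`, and if neither choice preserves the
hypothesis then the two violating sets `Y₁`, `Y₂` uncross, by submodularity, into a violation
for `S` at `insert e (Y₁ ∪ Y₂)` and `Y₁ ∩ Y₂`. For `S = B₂` the hypothesis holds because
`C₁ ∪ C₂ ⊇ B₁` spans `M`.
-/

open Set

section

variable {α : Type*} {f f₁ f₂ : Set α → ℕ}

structure IsMatroidRankLike (f : Set α → ℕ) : Prop where
  mono : Monotone f
  union_add_inter_le : ∀ X Y, f (X ∪ Y) + f (X ∩ Y) ≤ f X + f Y
  insert_le : ∀ e X, f (insert e X) ≤ f X + 1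

def PartitionCondition (f₁ f₂ : Set α → ℕ) (S : Set α) : Prop :=
  ∀ Y ⊆ S, f₁ S + f₂ S ≤ f₁ Y + f₂ Y + (S \ Y).ncard

def Splittable (f₁ f₂ : Set α → ℕ) (S : Set α) : Prop :=
  ∃ X ⊆ S, f₁ X = f₁ S ∧ f₂ (S \ X) = f₂ S

namespace IsMatroidRankLike

lemma add_le_of_subset_union_of_subset_inter (hf : IsMatroidRankLike f) {U I X Y : Set α}
    (hU : U ⊆ X ∪ Y) (hI : I ⊆ X ∩ Y) : f U + f I ≤ f X + f Y :=
  (add_le_add (hf.mono hU) (hf.mono hI)).trans (hf.union_add_inter_le X Y)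

lemma comp_union (hf : IsMatroidRankLike f) (C : Set α) :
    IsMatroidRankLike (fun X ↦ f (X ∪ C)) where
  mono _ _ h := hf.mono (union_subset_union_left C h)
  union_add_inter_le X Y := by
    have := hf.union_add_inter_le (X ∪ C) (Y ∪ C)
    rwa [← union_union_distrib_right, ← inter_union_distrib_right] at this
  insert_le e X := by simpa only [insert_union] using hf.insert_le e (X ∪ C)

lemma comp_insert (hf : IsMatroidRankLike f) (e : α) :
    IsMatroidRankLike (fun X ↦ f (insert e X)) := by
  simpa only [union_singleton] using hf.comp_union {e}

end IsMatroidRankLike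

lemma PartitionCondition.symm {S : Set α} (h : PartitionCondition f₁ f₂ S) :
    PartitionCondition f₂ f₁ S := fun Y hY ↦ by
  simpa only [add_comm (f₁ _)] using h Y hY

lemma Splittable.symm {S : Set α} (h : Splittable f₁ f₂ S) : Splittable f₂ f₁ S := by
  obtain ⟨X, hXS, h₁, h₂⟩ := h
  exact ⟨S \ X, sdiff_subset, h₂, by rwa [sdiff_sdiff_cancel_left hXS]⟩

section insert

variable {e : α} {T : Set α}

lemma ncard_insert_sdiff (he : e ∉ T) (hT : T.Finite) {Y : Set α} (hY : Y ⊆ T) :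
    (insert e T \ Y).ncard = (T \ Y).ncard + 1 := by
  rw [insert_sdiff_of_notMem _ (fun h ↦ he (hY h)),
    ncard_insert_of_notMem (fun h ↦ he h.1) (hT.subset sdiff_subset)]

lemma PartitionCondition.eq_or_eq (hf₁ : IsMatroidRankLike f₁) (hf₂ : IsMatroidRankLike f₂)
    (he : e ∉ T) (hT : T.Finite) (h : PartitionCondition f₁ f₂ (insert e T)) :
    f₁ T = f₁ (insert e T) ∨ f₂ T = f₂ (insert e T) := by
  have hT' := h T (subset_insert e T)
  rw [ncard_insert_sdiff he hT Subset.rfl, sdiff_self, ncard_empty] at hT'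
  have := hf₁.insert_le e T
  have := hf₂.insert_le e T
  have := hf₁.mono (subset_insert e T)
  have := hf₂.mono (subset_insert e T)
  omega

lemma Splittable.insert_left (he : e ∉ T) (h : Splittable (fun X ↦ f₁ (insert e X)) f₂ T)
    (h₂ : f₂ T = f₂ (insert e T)) : Splittable f₁ f₂ (insert e T) := by
  obtain ⟨X, hXT, hX₁, hX₂⟩ := h
  refine ⟨insert e X, insert_subset_insert hXT, hX₁, ?_⟩
  rwa [insert_sdiff_of_mem _ (mem_insert e X), sdiff_insert_of_notMem he, ← h₂]

lemma Splittable.insert_right (he : e ∉ T) (h : Splittable f₁ (fun X ↦ f₂ (insert e X)) T)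
    (h₁ : f₁ T = f₁ (insert e T)) : Splittable f₁ f₂ (insert e T) :=
  (h.symm.insert_left he h₁).symm

lemma PartitionCondition.eq_of_not_insert_left (hf₁ : IsMatroidRankLike f₁)
    (hf₂ : IsMatroidRankLike f₂) (he : e ∉ T) (hT : T.Finite)
    (h : PartitionCondition f₁ f₂ (insert e T))
    (hA : ¬ PartitionCondition (fun X ↦ f₁ (insert e X)) f₂ T) :
    f₁ T = f₁ (insert e T) := by
  obtain ⟨Y, hYT, hY⟩ := not_forall₂.mp hA
  dsimp only at hY
  have hYS := h Y (hYT.trans (subset_insert e T))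
  rw [ncard_insert_sdiff he hT hYT] at hYS
  have := hf₂.mono (subset_insert e T)
  -- `e` adds nothing to `Y`, hence by submodularity nothing to `T ⊇ Y`
  have hsub := hf₁.add_le_of_subset_union_of_subset_inter (U := insert e T) (I := Y)
    (X := T) (Y := insert e Y) (insert_subset (Or.inr (mem_insert e Y)) subset_union_left)
    (subset_inter hYT (subset_insert e Y))
  have := hf₁.mono (subset_insert e T)
  omega

lemma PartitionCondition.insert_left_or_insert_right (hf₁ : IsMatroidRankLike f₁)
    (hf₂ : IsMatroidRankLike f₂) (he : e ∉ T) (hT : T.Finite)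
    (h : PartitionCondition f₁ f₂ (insert e T)) :
    PartitionCondition (fun X ↦ f₁ (insert e X)) f₂ T ∨
      PartitionCondition f₁ (fun X ↦ f₂ (insert e X)) T := by
  by_contra! hAB
  obtain ⟨Y₁, hY₁T, hY₁⟩ := not_forall₂.mp hAB.1
  obtain ⟨Y₂, hY₂T, hY₂⟩ := not_forall₂.mp hAB.2
  dsimp only at hY₁ hY₂
  have hU := h (insert e (Y₁ ∪ Y₂)) (insert_subset_insert (union_subset hY₁T hY₂T))
  rw [insert_sdiff_of_mem _ (mem_insert e _), sdiff_insert_of_notMem he] at hU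
  have hI := h (Y₁ ∩ Y₂) ((inter_subset_left.trans hY₁T).trans (subset_insert e T))
  rw [ncard_insert_sdiff he hT (inter_subset_left.trans hY₁T)] at hI
  have h₁ := hf₁.add_le_of_subset_union_of_subset_inter insert_union.superset
    (inter_subset_inter_left Y₂ (subset_insert e Y₁))
  have h₂ := hf₂.add_le_of_subset_union_of_subset_inter union_insert.superset
    (inter_subset_inter_right Y₁ (subset_insert e Y₂))
  have hcard : (T \ Y₁).ncard + (T \ Y₂).ncard =
      (T \ (Y₁ ∪ Y₂)).ncard + (T \ (Y₁ ∩ Y₂)).ncard := by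
    rw [← sdiff_inter_sdiff, sdiff_inter,
      ncard_inter_add_ncard_union _ _ (hT.subset sdiff_subset) (hT.subset sdiff_subset)]
  have := hf₁.mono (subset_insert e T)
  have := hf₂.mono (subset_insert e T)
  omega

lemma PartitionCondition.splittable_insert_of_eq (hf₁ : IsMatroidRankLike f₁)
    (hf₂ : IsMatroidRankLike f₂) (he : e ∉ T) (hT : T.Finite)
    (ih : ∀ {g₁ g₂ : Set α → ℕ}, IsMatroidRankLike g₁ → IsMatroidRankLike g₂ →
      PartitionCondition g₁ g₂ T → Splittable g₁ g₂ T)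
    (h : PartitionCondition f₁ f₂ (insert e T)) (h₂ : f₂ T = f₂ (insert e T)) :
    Splittable f₁ f₂ (insert e T) := by
  by_cases hA : PartitionCondition (fun X ↦ f₁ (insert e X)) f₂ T
  · exact (ih (hf₁.comp_insert e) hf₂ hA).insert_left he h₂
  · have hB := (h.insert_left_or_insert_right hf₁ hf₂ he hT).resolve_left hA
    exact (ih hf₁ (hf₂.comp_insert e) hB).insert_right he
      (h.eq_of_not_insert_left hf₁ hf₂ he hT hA)

end insert

theorem PartitionCondition.splittable {S : Set α} (hf₁ : IsMatroidRankLike f₁)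
    (hf₂ : IsMatroidRankLike f₂) (hS : S.Finite) (h : PartitionCondition f₁ f₂ S) :
    Splittable f₁ f₂ S := by
  induction S, hS using Set.Finite.induction_on generalizing f₁ f₂ with
  | empty => exact ⟨∅, Subset.rfl, rfl, by rw [sdiff_empty]⟩
  | @insert e T he hT ih =>
    rcases h.eq_or_eq hf₁ hf₂ he hT with h₁ | h₂
    · exact (h.symm.splittable_insert_of_eq hf₂ hf₁ he hT ih h₁).symm
    · exact h.splittable_insert_of_eq hf₁ hf₂ he hT ih h₂

lemma ncard_sdiff_union_add_ncard_sdiff_union_le {A₁ B₁ A₂ B₂ : Set α} (hA₁ : A₁ ⊆ B₁)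
    (hA₂ : A₂ ⊆ B₂) (hB₁ : B₁.Finite) (hB₂ : B₂.Finite) :
    ((B₁ \ A₁) ∪ A₂).ncard + ((B₂ \ A₂) ∪ A₁).ncard ≤ B₁.ncard + B₂.ncard := by
  have := ncard_union_le (B₁ \ A₁) A₂
  have := ncard_union_le (B₂ \ A₂) A₁
  have := ncard_sdiff_add_ncard_of_subset hA₁ hB₁
  have := ncard_sdiff_add_ncard_of_subset hA₂ hB₂
  omega

namespace Matroid

noncomputable def rk (M : Matroid α) (X : Set α) : ℕ := (M.eRk X).toNat

variable {M : Matroid α} {B B' C₁ C₂ I X : Set α}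

lemma Indep.rk_eq_ncard (hI : M.Indep I) : M.rk I = I.ncard := by
  rw [rk, hI.eRk_eq_encard, ncard_def]

lemma rk_le_ncard (hX : X.Finite) : M.rk X ≤ X.ncard :=
  ENat.toNat_le_toNat (M.eRk_le_encard X) hX.encard_lt_top.ne

lemma IsBase.rk_union (hB : M.IsBase B) (X : Set α) : M.rk (B ∪ X) = M.rk M.E := by
  rw [rk, rk, eRk_ground, le_antisymm (M.eRk_le_eRank _)
    (hB.eRk_eq_eRank ▸ M.eRk_mono subset_union_left)]

lemma IsBase.ncard_eq_rk_ground (hB : M.IsBase B) : B.ncard = M.rk M.E := by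
  rw [← hB.indep.rk_eq_ncard, ← hB.rk_union ∅, union_empty]

variable [M.RankFinite]

lemma cast_rk (X : Set α) : (M.rk X : ℕ∞) = M.eRk X :=
  ENat.natCast_toNat (M.eRk_ne_top_iff.2 (M.isRkFinite_set X))

variable (M) in
lemma isMatroidRankLike_rk : IsMatroidRankLike M.rk where
  mono X Y h := by
    have : (M.rk X : ℕ∞) ≤ M.rk Y := by simpa only [cast_rk] using M.eRk_mono h
    exact_mod_cast this
  union_add_inter_le X Y := by
    have : (M.rk (X ∩ Y) + M.rk (X ∪ Y) : ℕ∞) ≤ M.rk X + M.rk Y := by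
      simpa only [cast_rk] using M.eRk_inter_add_eRk_union_le X Y
    rw [add_comm]
    exact_mod_cast this
  insert_le e X := by
    have : (M.rk (insert e X) : ℕ∞) ≤ M.rk X + 1 := by
      simpa only [cast_rk] using M.eRk_insert_le_add_one e X
    exact_mod_cast this

lemma isBase_of_rk_eq_of_ncard_le (hX : X.Finite) (hrk : M.rk X = M.rk M.E)
    (hcard : X.ncard ≤ M.rk M.E) : M.IsBase X := by
  have hXI : M.rk X = X.ncard := le_antisymm (rk_le_ncard hX) (hcard.trans hrk.ge)
  have hind : M.Indep X := by
    rw [indep_iff_eRk_eq_encard_of_finite hX, ← cast_rk, hXI, hX.cast_ncard_eq]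
  exact hind.isBase_of_eRk_ge hX (by rw [← eRk_ground, ← cast_rk, ← cast_rk, hrk])

lemma IsBase.partitionCondition_rk_union (hB : M.IsBase B) (hBC : B ⊆ C₁ ∪ C₂)
    (hB' : M.IsBase B') :
    PartitionCondition (fun X ↦ M.rk (X ∪ C₁)) (fun X ↦ M.rk (X ∪ C₂)) B' := by
  intro Y hY
  have hsub := M.isMatroidRankLike_rk.add_le_of_subset_union_of_subset_inter (I := Y)
    (union_subset (hBC.trans (union_subset_union subset_union_right subset_union_right))
      (subset_union_left.trans subset_union_left))
    (subset_inter subset_union_left subset_union_left)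
  rw [hB.rk_union, (hB'.indep.subset hY).rk_eq_ncard] at hsub
  have := ncard_sdiff_add_ncard_of_subset hY hB'.finite
  have := hB'.ncard_eq_rk_ground
  dsimp only
  rw [hB'.rk_union, hB'.rk_union]
  omega

lemma isBase_sdiff_union_and_isBase_sdiff_union_of_rk_eq {A₁ A₂ B₁ B₂ : Set α}
    (hB₁ : M.IsBase B₁) (hB₂ : M.IsBase B₂) (hA₁ : A₁ ⊆ B₁) (hA₂ : A₂ ⊆ B₂)
    (h₁ : M.rk ((B₁ \ A₁) ∪ A₂) = M.rk M.E) (h₂ : M.rk ((B₂ \ A₂) ∪ A₁) = M.rk M.E) :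
    M.IsBase ((B₁ \ A₁) ∪ A₂) ∧ M.IsBase ((B₂ \ A₂) ∪ A₁) := by
  have hfin₁ : ((B₁ \ A₁) ∪ A₂).Finite :=
    (hB₁.finite.subset sdiff_subset).union (hB₂.finite.subset hA₂)
  have hfin₂ : ((B₂ \ A₂) ∪ A₁).Finite :=
    (hB₂.finite.subset sdiff_subset).union (hB₁.finite.subset hA₁)
  have hcard := ncard_sdiff_union_add_ncard_sdiff_union_le hA₁ hA₂ hB₁.finite hB₂.finite
  rw [hB₁.ncard_eq_rk_ground, hB₂.ncard_eq_rk_ground] at hcard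
  have := rk_le_ncard (M := M) hfin₁
  have := rk_le_ncard (M := M) hfin₂
  exact ⟨isBase_of_rk_eq_of_ncard_le hfin₁ h₁ (by omega),
    isBase_of_rk_eq_of_ncard_le hfin₂ h₂ (by omega)⟩

end Matroid

end

/-- **Multiple basis exchange.** If `B₁` and `B₂` are bases of a matroid `M` on a
finite ground set, then for every `A₁ ⊆ B₁` there is `A₂ ⊆ B₂` such that both
`(B₁ \ A₁) ∪ A₂` and `(B₂ \ A₂) ∪ A₁` are bases of `M`. -/
theorem multiple_basis_exchange {α : Type*} (M : Matroid α) (hE : M.E.Finite)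
    (B₁ B₂ : Set α) (hB₁ : M.IsBase B₁) (hB₂ : M.IsBase B₂) (A₁ : Set α) (hA₁ : A₁ ⊆ B₁) :
    ∃ A₂ ⊆ B₂, M.IsBase ((B₁ \ A₁) ∪ A₂) ∧ M.IsBase ((B₂ \ A₂) ∪ A₁) := by
  have : M.Finite := ⟨hE⟩
  obtain ⟨A₂, hA₂, h₁, h₂⟩ :=
    (hB₁.partitionCondition_rk_union (subset_sdiff_union B₁ A₁) hB₂).splittable
      (M.isMatroidRankLike_rk.comp_union _) (M.isMatroidRankLike_rk.comp_union _) hB₂.finite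
  dsimp only at h₁ h₂
  rw [hB₂.rk_union, union_comm] at h₁
  rw [hB₂.rk_union] at h₂
  exact ⟨A₂, hA₂,
    Matroid.isBase_sdiff_union_and_isBase_sdiff_union_of_rk_eq hB₁ hB₂ hA₁ hA₂ h₁ h₂⟩
end

section
/- Let A and B be bases of a matroid M on a finite ground set. Then for every partition B = B₁ ⊔ B₂ ⊔ ⋯ ⊔ B_k of B into k pairwise disjoint (possibly empty) parts, there exists a partition A = A₁ ⊔ A₂ ⊔ ⋯ ⊔ A_k of A into k pairwise disjoint parts such that (B \ B_i) ∪ A_i is a basis of M for every i ∈ {1, …, k}. -/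
/-!
Grow pairwise disjoint sets `F i ⊆ A` keeping every `(B \ Bp i) ∪ F i` independent, as in the
matroid partition algorithm. An element `y ∈ F i` may be swapped out for `x` when
`(B \ Bp i) ∪ F i - y + x` is independent and `x` is spanned by `(B \ Bp i) ∪ F i`; this is an arc
`x → y`. An uncovered `u ∈ A` that reaches, along arcs, an element insertable outright into some
part is added after finitely many single moves: moving the last element of the path into its
part keeps every earlier arc or makes its tail insertable, so the path gets shorter.

If no insertable element is reachable, the set `R` of elements reachable from `u` is spanned by
`(B \ Bp i) ∪ (F i ∩ R)` for every `i`. Submodularity of the rank, applied along the parts of `B`,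
gives `k |B| + |R| ≤ ∑ i, r((B \ Bp i) ∪ R) + |B| ≤ k |B| + |R ∩ ⋃ F|`, impossible as `u ∉ ⋃ F`.
Once `⋃ F = A`, the pieces have total size `k |B|`, so each one is a base.
-/

open Set Function

lemma ENat.eq_of_forall_le_of_sum_eq {ι : Type*} [Fintype ι] {f g : ι → ℕ∞}
    (hle : ∀ i, f i ≤ g i) (hsum : ∑ i, f i = ∑ i, g i) (htop : ∑ i, g i ≠ ⊤) (i : ι) :
    f i = g i := by
  have hg : ∀ i, g i ≠ ⊤ := fun i hi ↦ htop (WithTop.sum_eq_top.2 ⟨i, Finset.mem_univ i, hi⟩)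
  lift g to ι → ℕ using hg
  lift f to ι → ℕ using fun i ↦ ne_top_of_le_ne_top (ENat.natCast_ne_top _) (hle i)
  simp only [← Nat.cast_sum, Nat.cast_inj, Nat.cast_le] at hle hsum ⊢
  exact (Finset.sum_eq_sum_iff_of_le fun i _ ↦ hle i).1 hsum i (Finset.mem_univ i)

namespace Set

variable {α ι : Type*} [Fintype ι]

lemma encard_iUnion_eq_sum {s : ι → Set α} (hs : Pairwise (Disjoint on s)) :
    (⋃ i, s i).encard = ∑ i, (s i).encard := by
  rw [encard_iUnion_of_finite hs, finsum_eq_sum_of_fintype]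

lemma sum_encard_sdiff_add_encard {B : Set α} {Bp : ι → Set α} (hdisj : Pairwise (Disjoint on Bp))
    (hBun : ⋃ i, Bp i = B) : ∑ i, (B \ Bp i).encard + B.encard = Fintype.card ι * B.encard := by
  calc ∑ i, (B \ Bp i).encard + B.encard = ∑ i, ((B \ Bp i).encard + (Bp i).encard) := by
        rw [Finset.sum_add_distrib, ← encard_iUnion_eq_sum hdisj, hBun]
    _ = ∑ _i : ι, B.encard := Finset.sum_congr rfl fun i _ ↦
        encard_sdiff_add_encard_of_subset (hBun ▸ subset_iUnion Bp i)
    _ = Fintype.card ι * B.encard := by simp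

end Set

section Reach

variable {α : Type*} (r : α → α → Prop) (S : Set α)

def ReachesWithin : ℕ → α → Prop
  | 0, x => x ∈ S
  | n + 1, x => x ∈ S ∨ ∃ y, r x y ∧ ReachesWithin n y

variable {r S}

lemma ReachesWithin.mono {r' : α → α → Prop} {S' : Set α} (hS : S ⊆ S')
    (hr : ∀ x y, r x y → r' x y ∨ x ∈ S') : ∀ {n x}, ReachesWithin r S n x → ReachesWithin r' S' n x
  | 0, _, hx => hS hx
  | _ + 1, _, .inl hx => .inl (hS hx)
  | _ + 1, x, .inr ⟨y, hxy, hy⟩ =>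
    (hr x y hxy).elim (fun h ↦ .inr ⟨y, h, hy.mono hS hr⟩) .inl

lemma ReachesWithin.exists_last : ∀ {n x}, ReachesWithin r S (n + 1) x →
    x ∈ S ∨ ∃ p w, w ∈ S ∧ r p w ∧ ReachesWithin r {p} n x
  | _, _, .inl hx => .inl hx
  | 0, x, .inr ⟨y, hxy, hy⟩ => .inr ⟨x, y, hy, hxy, rfl⟩
  | _ + 1, x, .inr ⟨y, hxy, hy⟩ => by
    refine .inr ?_
    obtain hy | ⟨p, w, hw, hpw, hp⟩ := hy.exists_last
    · exact ⟨x, y, hy, hxy, .inl rfl⟩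
    · exact ⟨p, w, hw, hpw, .inr ⟨y, hxy, hp⟩⟩

lemma Relation.ReflTransGen.exists_reachesWithin {x y : α} (h : Relation.ReflTransGen r x y)
    (hy : y ∈ S) : ∃ n, ReachesWithin r S n x := by
  induction h using Relation.ReflTransGen.head_induction_on with
  | refl => exact ⟨0, hy⟩
  | head hxz _ ih =>
    obtain ⟨n, hn⟩ := ih
    exact ⟨n + 1, .inr ⟨_, hxz, hn⟩⟩

end Reach

namespace Matroid

variable {α ι : Type*} {M : Matroid α}

lemma Indep.mem_closure_setOf_insert_sdiff_indep {I : Set α} {e : α} (hI : M.Indep I)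
    (he : e ∈ M.closure I) (heI : e ∉ I) :
    e ∈ M.closure {y ∈ I | M.Indep (insert e I \ {y})} := by
  have hsub : M.fundCircuit e I \ {e} ⊆ {y ∈ I | M.Indep (insert e I \ {y})} := fun y hy ↦
    ⟨(M.fundCircuit_subset_insert e I hy.1).resolve_left hy.2,
      (hI.mem_fundCircuit_iff he heI).1 hy.1⟩
  exact M.closure_subset_closure hsub
    ((hI.fundCircuit_isCircuit he heI).mem_closure_sdiff_singleton_of_mem (M.mem_fundCircuit e I))

lemma card_mul_eRk_add_eRk_le_sum [Fintype ι] (M : Matroid α) {B Z : Set α} {Bp : ι → Set α}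
    (hdisj : Pairwise (Disjoint on Bp)) :
    Fintype.card ι * M.eRk B + M.eRk ((B \ ⋃ i, Bp i) ∪ Z) ≤
      ∑ i, M.eRk ((B \ Bp i) ∪ Z) + M.eRk (B ∪ Z) := by
  suffices ∀ s : Finset ι, s.card * M.eRk B + M.eRk ((B \ ⋃ i ∈ s, Bp i) ∪ Z) ≤
      ∑ i ∈ s, M.eRk ((B \ Bp i) ∪ Z) + M.eRk (B ∪ Z) by
    simpa using this Finset.univ
  classical
  intro s
  induction s using Finset.induction_on with
  | empty => simp
  | insert a s ha ih =>
    have hdisj' : Disjoint (⋃ i ∈ s, Bp i) (Bp a) :=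
      Set.disjoint_iUnion₂_left.2 fun i hi ↦ hdisj (ne_of_mem_of_not_mem hi ha)
    have hsub := M.eRk_inter_add_eRk_union_le ((B \ ⋃ i ∈ s, Bp i) ∪ Z) ((B \ Bp a) ∪ Z)
    rw [← inter_union_distrib_right, sdiff_inter_sdiff, ← union_union_distrib_right, ← sdiff_inter,
      hdisj'.inter_eq, sdiff_empty, union_comm _ (Bp a), ← Finset.set_biUnion_insert] at hsub
    have hB : M.eRk B ≤ M.eRk (B ∪ Z) := M.eRk_mono subset_union_left
    rw [Finset.card_insert_of_notMem ha, Finset.sum_insert ha]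
    calc ((s.card + 1 : ℕ) : ℕ∞) * M.eRk B + M.eRk ((B \ ⋃ i ∈ insert a s, Bp i) ∪ Z)
        = s.card * M.eRk B + (M.eRk ((B \ ⋃ i ∈ insert a s, Bp i) ∪ Z) + M.eRk B) := by
          push_cast; ring
      _ ≤ s.card * M.eRk B + (M.eRk ((B \ ⋃ i ∈ insert a s, Bp i) ∪ Z) + M.eRk (B ∪ Z)) := by
          gcongr
      _ ≤ s.card * M.eRk B + (M.eRk ((B \ ⋃ i ∈ s, Bp i) ∪ Z) + M.eRk ((B \ Bp a) ∪ Z)) := by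
          gcongr
      _ = (s.card * M.eRk B + M.eRk ((B \ ⋃ i ∈ s, Bp i) ∪ Z)) + M.eRk ((B \ Bp a) ∪ Z) := by
          ring
      _ ≤ (∑ i ∈ s, M.eRk ((B \ Bp i) ∪ Z) + M.eRk (B ∪ Z)) + M.eRk ((B \ Bp a) ∪ Z) := by
          gcongr
      _ = M.eRk ((B \ Bp a) ∪ Z) + ∑ i ∈ s, M.eRk ((B \ Bp i) ∪ Z) + M.eRk (B ∪ Z) := by
          ring

end Matroid

namespace Matroid.PartitionExchange

variable {α ι : Type*} {M : Matroid α} {A B : Set α} {Bp F : ι → Set α}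

def piece (B : Set α) (Bp F : ι → Set α) (i : ι) : Set α := (B \ Bp i) ∪ F i

structure IsPartial (M : Matroid α) (A B : Set α) (Bp F : ι → Set α) : Prop where
  subset : ∀ i, F i ⊆ A
  pairwise_disjoint : Pairwise (Disjoint on F)
  disjoint_sdiff : ∀ i, Disjoint (F i) (B \ Bp i)
  indep : ∀ i, M.Indep (piece B Bp F i)

def sinks (M : Matroid α) (B : Set α) (Bp F : ι → Set α) : Set α :=
  {x | ∃ i, x ∈ M.E \ M.closure (piece B Bp F i)}

def IsArc (M : Matroid α) (B : Set α) (Bp F : ι → Set α) (x y : α) : Prop :=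
  ∃ i, y ∈ F i ∧ x ∈ M.closure (piece B Bp F i) \ piece B Bp F i ∧
    M.Indep (insert x (piece B Bp F i) \ {y})

section assign

variable [DecidableEq ι] {x : α} {i j : ι}

def assign (F : ι → Set α) (x : α) (i : ι) : ι → Set α :=
  Function.update (fun j ↦ F j \ {x}) i (insert x (F i))

@[simp] lemma assign_self : assign F x i i = insert x (F i) := by simp [assign]

lemma assign_of_ne (h : j ≠ i) : assign F x i j = F j \ {x} := by simp [assign, h]

lemma assign_subset_of_ne (h : j ≠ i) : assign F x i j ⊆ F j :=
  (assign_of_ne h).trans_subset sdiff_subset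

lemma iUnion_assign : ⋃ j, assign F x i j = insert x (⋃ j, F j) := by
  ext y
  simp only [mem_iUnion, mem_insert_iff]
  constructor
  · rintro ⟨j, hj⟩
    obtain rfl | hji := eq_or_ne j i
    · obtain rfl | hj := (by simpa using hj : y = x ∨ y ∈ F j)
      exacts [.inl rfl, .inr ⟨j, hj⟩]
    · exact .inr ⟨j, assign_subset_of_ne hji hj⟩
  · rintro (rfl | ⟨j, hj⟩)
    · exact ⟨i, by simp⟩
    obtain rfl | hji := eq_or_ne j i
    · exact ⟨j, by simp [hj]⟩
    obtain rfl | hyx := eq_or_ne y x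
    · exact ⟨i, by simp⟩
    · exact ⟨j, by simp [assign_of_ne hji, hj, hyx]⟩

lemma piece_assign_self : piece B Bp (assign F x i) i = insert x (piece B Bp F i) := by
  simp [piece, union_insert]

lemma piece_assign_subset_of_ne (h : j ≠ i) : piece B Bp (assign F x i) j ⊆ piece B Bp F j :=
  union_subset_union_right _ (assign_subset_of_ne h)

lemma isPartial_assign (hF : IsPartial M A B Bp F) (hxA : x ∈ A)
    (hx : x ∈ M.E \ M.closure (piece B Bp F i)) : IsPartial M A B Bp (assign F x i) where
  subset j := by
    obtain rfl | hji := eq_or_ne j i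
    · simpa using insert_subset hxA (hF.subset j)
    · exact (assign_subset_of_ne hji).trans (hF.subset j)
  pairwise_disjoint j k hjk := by
    have hmem : ∀ {y l}, y ∈ assign F x i l → (y = x → l = i) ∧ (y ≠ x → y ∈ F l) := by
      intro y l hy
      obtain rfl | hli := eq_or_ne l i
      · simp only [assign_self, mem_insert_iff] at hy
        exact ⟨fun _ ↦ rfl, hy.resolve_left⟩
      · simp_all [assign_of_ne hli]
    refine disjoint_left.2 fun y hyj hyk ↦ ?_
    obtain rfl | hyx := eq_or_ne y x
    · exact hjk (((hmem hyj).1 rfl).trans ((hmem hyk).1 rfl).symm)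
    · exact disjoint_left.1 (hF.pairwise_disjoint hjk) ((hmem hyj).2 hyx) ((hmem hyk).2 hyx)
  disjoint_sdiff j := by
    obtain rfl | hji := eq_or_ne j i
    · simp only [assign_self, disjoint_insert_left]
      exact ⟨fun h ↦ hx.2 (M.mem_closure_of_mem' (.inl h) hx.1), hF.disjoint_sdiff j⟩
    · exact (hF.disjoint_sdiff j).mono_left (assign_subset_of_ne hji)
  indep j := by
    obtain rfl | hji := eq_or_ne j i
    · rw [piece_assign_self]
      exact (hF.indep j).insert_indep_iff.2 (.inl hx)
    · exact (hF.indep j).subset (piece_assign_subset_of_ne hji)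

lemma IsPartial.isArc_assign_or_mem_sinks (hF : IsPartial M A B Bp F) {w x y : α}
    (hw : w ∈ M.E \ M.closure (piece B Bp F i)) (hxy : IsArc M B Bp F x y) :
    (IsArc M B Bp (assign F w i) x y ∧ y ≠ w) ∨ x ∈ sinks M B Bp (assign F w i) := by
  obtain ⟨j, hyF, ⟨hxcl, hxT⟩, hxind⟩ := hxy
  have hTE := (hF.indep j).subset_ground
  obtain rfl | hji := eq_or_ne j i
  -- `insert x piece \ {y}` lies in the closure of the old piece, which does not contain `w`.
  · have hxw : x ≠ w := by rintro rfl; exact hw.2 hxcl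
    have hyw : y ≠ w := by rintro rfl; exact hw.2 (M.subset_closure _ hTE (.inr hyF))
    have hJ : insert x (piece B Bp F j) \ {y} ⊆ M.closure (piece B Bp F j) :=
      sdiff_subset.trans (insert_subset hxcl (M.subset_closure _ hTE))
    refine .inl ⟨⟨j, by simp [hyF], ?_, ?_⟩, hyw⟩ <;> rw [piece_assign_self]
    · exact ⟨M.closure_subset_closure (subset_insert _ _) hxcl, by simp [hxw, hxT]⟩
    · rw [insert_comm, ← insert_sdiff_singleton_comm hyw.symm]
      exact hxind.insert_indep_iff.2 <| .inl
        ⟨hw.1, fun h ↦ hw.2 (M.closure_subset_closure_of_subset_closure hJ h)⟩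
  · have hT' : piece B Bp (assign F w i) j ⊆ piece B Bp F j := piece_assign_subset_of_ne hji
    have hxE : x ∈ M.E := M.closure_subset_ground _ hxcl
    by_cases hxcl' : x ∈ M.closure (piece B Bp (assign F w i) j)
    · have hsub : insert x (piece B Bp (assign F w i) j) \ {y} ⊆ insert x (piece B Bp F j) \ {y} :=
        sdiff_subset_sdiff_left (insert_subset_insert hT')
      have hyw : y ≠ w := by
        rintro rfl
        have hyT' : y ∉ insert x (piece B Bp (assign F y i) j) := by
          rintro (h | h | h)
          · exact hxT (h ▸ .inr hyF)
          · exact disjoint_left.1 (hF.disjoint_sdiff j) hyF h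
          · exact (assign_of_ne hji ▸ h).2 rfl
        refine (((hF.indep j).subset hT').notMem_closure_iff_of_notMem
          (fun h ↦ hxT (hT' h)) hxE).2 ?_ hxcl'
        exact hxind.subset ((sdiff_singleton_eq_self hyT').symm.trans_subset hsub)
      refine .inl ⟨⟨j, ?_, ⟨hxcl', fun h ↦ hxT (hT' h)⟩, hxind.subset hsub⟩, hyw⟩
      rw [assign_of_ne hji]
      exact ⟨hyF, hyw⟩
    · exact .inr ⟨j, hxE, hxcl'⟩

end assign

lemma isPartial_empty (hB : M.IsBase B) : IsPartial M A B Bp fun _ ↦ ∅ where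
  subset _ := empty_subset A
  pairwise_disjoint _ _ _ := disjoint_bot_left
  disjoint_sdiff _ := disjoint_bot_left
  indep _ := hB.indep.subset (by simp [piece])

lemma IsPartial.exists_of_reachesWithin [DecidableEq ι] {u : α} (hu : u ∈ A) (n : ℕ) :
    ∀ {F}, IsPartial M A B Bp F → ReachesWithin (IsArc M B Bp F) (sinks M B Bp F) n u →
      ∃ F', IsPartial M A B Bp F' ∧ ⋃ i, F' i = insert u (⋃ i, F i) := by
  have hsink : ∀ {F}, IsPartial M A B Bp F → u ∈ sinks M B Bp F →
      ∃ F', IsPartial M A B Bp F' ∧ ⋃ i, F' i = insert u (⋃ i, F i) :=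
    fun hF ⟨i, hui⟩ ↦ ⟨_, isPartial_assign hF hu hui, iUnion_assign⟩
  induction n with
  | zero => exact hsink
  | succ n ih =>
    intro F hF hreach
    obtain hu | ⟨p, w, ⟨i, hwi⟩, hpw, hp⟩ := hreach.exists_last
    · exact hsink hF hu
    have ⟨j, hwF, _⟩ := hpw
    have hunion : ⋃ k, assign F w i k = ⋃ k, F k := by
      rw [iUnion_assign, insert_eq_of_mem (mem_iUnion_of_mem j hwF)]
    have hp' : p ∈ sinks M B Bp (assign F w i) := by
      obtain ⟨-, hww⟩ | h := hF.isArc_assign_or_mem_sinks hwi hpw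
      exacts [(hww rfl).elim, h]
    rw [← hunion]
    refine ih (isPartial_assign hF (hF.subset j hwF) hwi) (hp.mono (singleton_subset_iff.2 hp') ?_)
    exact fun x y hxy ↦ (hF.isArc_assign_or_mem_sinks hwi hxy).imp_left And.left

lemma IsPartial.subset_closure_of_disjoint_sinks (hF : IsPartial M A B Bp F) {R : Set α}
    (hRE : R ⊆ M.E) (hR : ∀ x ∈ R, ∀ y, IsArc M B Bp F x y → y ∈ R)
    (hRs : Disjoint R (sinks M B Bp F)) (i : ι) :
    R ⊆ M.closure ((B \ Bp i) ∪ (F i ∩ R)) := by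
  intro x hx
  have hxcl : x ∈ M.closure (piece B Bp F i) :=
    by_contra fun h ↦ disjoint_left.1 hRs hx ⟨i, hRE hx, h⟩
  by_cases hxT : x ∈ piece B Bp F i
  · refine M.mem_closure_of_mem' ?_ (hRE hx)
    exact hxT.imp_right fun h ↦ ⟨h, hx⟩
  refine M.closure_subset_closure ?_ ((hF.indep i).mem_closure_setOf_insert_sdiff_indep hxcl hxT)
  rintro y ⟨hyB | hyF, hyx⟩
  exacts [.inl hyB, .inr ⟨hyF, hR x hx y ⟨i, hyF, ⟨hxcl, hxT⟩, hyx⟩⟩]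

lemma IsPartial.eRk_sdiff_union_le (hF : IsPartial M A B Bp F) {R : Set α}
    (hRE : R ⊆ M.E) (hR : ∀ x ∈ R, ∀ y, IsArc M B Bp F x y → y ∈ R)
    (hRs : Disjoint R (sinks M B Bp F)) (i : ι) :
    M.eRk ((B \ Bp i) ∪ R) ≤ (B \ Bp i).encard + (F i ∩ R).encard := by
  have hind : M.Indep ((B \ Bp i) ∪ (F i ∩ R)) :=
    (hF.indep i).subset (union_subset_union_right _ inter_subset_left)
  calc M.eRk ((B \ Bp i) ∪ R) ≤ M.eRk (M.closure ((B \ Bp i) ∪ (F i ∩ R))) :=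
        M.eRk_mono (union_subset (subset_union_left.trans (M.subset_closure _ hind.subset_ground))
          (hF.subset_closure_of_disjoint_sinks hRE hR hRs i))
    _ = ((B \ Bp i) ∪ (F i ∩ R)).encard := by rw [eRk_closure_eq, hind.eRk_eq_encard]
    _ ≤ (B \ Bp i).encard + (F i ∩ R).encard := encard_union_le _ _

section cover

variable [Fintype ι]

lemma IsPartial.not_disjoint_sinks (hE : M.E.Finite) (hA : M.Indep A) (hB : M.IsBase B)
    (hdisj : Pairwise (Disjoint on Bp)) (hBun : ⋃ i, Bp i = B) (hF : IsPartial M A B Bp F)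
    {R : Set α} (hRA : R ⊆ A) (hR : ∀ x ∈ R, ∀ y, IsArc M B Bp F x y → y ∈ R)
    (hRF : ¬ R ⊆ ⋃ i, F i) : ¬ Disjoint R (sinks M B Bp F) := by
  intro hRs
  have hRE : R ⊆ M.E := hRA.trans hA.subset_ground
  have hchain := M.card_mul_eRk_add_eRk_le_sum (B := B) (Z := R) hdisj
  rw [hBun, sdiff_self, empty_union, hB.indep.eRk_eq_encard, (hA.subset hRA).eRk_eq_encard]
    at hchain
  have hBR : M.eRk (B ∪ R) ≤ B.encard := hB.encard_eq_eRank ▸ M.eRk_le_eRank _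
  have hsum : ∑ i, M.eRk ((B \ Bp i) ∪ R) ≤
      ∑ i, (B \ Bp i).encard + ((⋃ i, F i) ∩ R).encard := by
    rw [iUnion_inter, encard_iUnion_eq_sum fun i j hij ↦
      (hF.pairwise_disjoint hij).mono inter_subset_left inter_subset_left, ← Finset.sum_add_distrib]
    exact Finset.sum_le_sum fun i _ ↦ hF.eRk_sdiff_union_le hRE hR hRs i
  have hlt : ((⋃ i, F i) ∩ R).encard < R.encard :=
    ((hE.subset hRE).subset inter_subset_right).encard_lt_encard (inter_ssubset_right_iff.2 hRF)
  have hBfin : (Fintype.card ι : ℕ∞) * B.encard ≠ ⊤ :=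
    WithTop.mul_ne_top (ENat.natCast_ne_top _) (hE.subset hB.subset_ground).encard_lt_top.ne
  refine ((ENat.add_lt_add_iff_left hBfin).2 hlt).not_ge ?_
  calc (Fintype.card ι : ℕ∞) * B.encard + R.encard
      ≤ ∑ i, M.eRk ((B \ Bp i) ∪ R) + M.eRk (B ∪ R) := hchain
    _ ≤ ∑ i, (B \ Bp i).encard + ((⋃ i, F i) ∩ R).encard + B.encard := add_le_add hsum hBR
    _ = (∑ i, (B \ Bp i).encard + B.encard) + ((⋃ i, F i) ∩ R).encard := by ring
    _ = Fintype.card ι * B.encard + ((⋃ i, F i) ∩ R).encard := by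
      rw [sum_encard_sdiff_add_encard hdisj hBun]

lemma IsPartial.exists_iUnion_eq_insert [DecidableEq ι] (hE : M.E.Finite) (hA : M.Indep A)
    (hB : M.IsBase B) (hdisj : Pairwise (Disjoint on Bp)) (hBun : ⋃ i, Bp i = B)
    (hF : IsPartial M A B Bp F) {u : α} (hu : u ∈ A) (huF : u ∉ ⋃ i, F i) :
    ∃ F', IsPartial M A B Bp F' ∧ ⋃ i, F' i = insert u (⋃ i, F i) := by
  set R := {v | Relation.ReflTransGen (IsArc M B Bp F) u v}
  have hRA : R ⊆ A := fun v hv ↦ by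
    induction hv with
    | refl => exact hu
    | tail _ hxy _ =>
      obtain ⟨i, hyF, -⟩ := hxy
      exact hF.subset i hyF
  have hRclosed : ∀ x ∈ R, ∀ y, IsArc M B Bp F x y → y ∈ R := fun _ hx _ hxy ↦ hx.tail hxy
  have hRF : ¬ R ⊆ ⋃ i, F i := fun h ↦ huF (h .refl)
  obtain ⟨v, hvR, hv⟩ :=
    not_disjoint_iff.1 (hF.not_disjoint_sinks hE hA hB hdisj hBun hRA hRclosed hRF)
  obtain ⟨n, hn⟩ := Relation.ReflTransGen.exists_reachesWithin hvR hv
  exact hF.exists_of_reachesWithin hu n hn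

lemma exists_isPartial_iUnion_eq [DecidableEq ι] (hE : M.E.Finite) (hA : M.IsBase A)
    (hB : M.IsBase B) (hdisj : Pairwise (Disjoint on Bp)) (hBun : ⋃ i, Bp i = B) :
    ∃ F, IsPartial M A B Bp F ∧ ⋃ i, F i = A := by
  suffices ∀ X ⊆ A, ∃ F, IsPartial M A B Bp F ∧ X ⊆ ⋃ i, F i by
    obtain ⟨F, hF, hAF⟩ := this A Subset.rfl
    exact ⟨F, hF, (iUnion_subset hF.subset).antisymm hAF⟩
  intro X hXA
  induction X, (hE.subset (hXA.trans hA.subset_ground)) using Set.Finite.induction_on with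
  | empty => exact ⟨_, isPartial_empty hB, empty_subset _⟩
  | @insert u X _ _ ih =>
    obtain ⟨F, hF, hXF⟩ := ih ((subset_insert u X).trans hXA)
    by_cases huF : u ∈ ⋃ i, F i
    · exact ⟨F, hF, insert_subset huF hXF⟩
    obtain ⟨F', hF', hF'F⟩ :=
      hF.exists_iUnion_eq_insert hE hA.indep hB hdisj hBun (hXA (mem_insert u X)) huF
    exact ⟨F', hF', hF'F ▸ insert_subset_insert hXF⟩

lemma IsPartial.isBase_piece (hE : M.E.Finite) (hA : M.IsBase A) (hB : M.IsBase B)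
    (hdisj : Pairwise (Disjoint on Bp)) (hBun : ⋃ i, Bp i = B) (hF : IsPartial M A B Bp F)
    (hFA : ⋃ i, F i = A) (i : ι) : M.IsBase (piece B Bp F i) := by
  have hle : ∀ i, (piece B Bp F i).encard ≤ B.encard :=
    fun i ↦ hB.encard_eq_eRank ▸ (hF.indep i).encard_le_eRank
  have hBfin : B.encard ≠ ⊤ := (hE.subset hB.subset_ground).encard_lt_top.ne
  have hsum : ∑ i, (piece B Bp F i).encard = ∑ _i : ι, B.encard := by
    calc ∑ i, (piece B Bp F i).encard = ∑ i, ((B \ Bp i).encard + (F i).encard) :=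
          Finset.sum_congr rfl fun i _ ↦ encard_union_eq (hF.disjoint_sdiff i).symm
      _ = ∑ i, (B \ Bp i).encard + B.encard := by
          rw [Finset.sum_add_distrib, ← encard_iUnion_eq_sum hF.pairwise_disjoint, hFA,
            hA.encard_eq_encard_of_isBase hB]
      _ = ∑ _i : ι, B.encard := by rw [sum_encard_sdiff_add_encard hdisj hBun]; simp
  have heq := ENat.eq_of_forall_le_of_sum_eq hle hsum (WithTop.sum_ne_top.2 fun _ _ ↦ hBfin) i
  refine (hF.indep i).isBase_of_eRk_ge (hE.subset (hF.indep i).subset_ground) ?_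
  rw [(hF.indep i).eRk_eq_encard, heq, hB.encard_eq_eRank]

end cover

end Matroid.PartitionExchange

/-- If `A` and `B` are bases of a matroid `M` on a finite ground set, then for every
partition `B = B₁ ⊔ ⋯ ⊔ B_k` there is a partition `A = A₁ ⊔ ⋯ ⊔ A_k` such that
`(B \ B_i) ∪ A_i` is a basis for every `i`. -/
theorem basis_partition_exchange {α : Type*} (M : Matroid α) (hE : M.E.Finite)
    (A B : Set α) (hA : M.IsBase A) (hB : M.IsBase B) (k : ℕ) (Bp : Fin k → Set α)
    (hBdisj : Pairwise (Function.onFun Disjoint Bp)) (hBun : ⋃ i, Bp i = B) :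
    ∃ Ap : Fin k → Set α, Pairwise (Function.onFun Disjoint Ap) ∧ (⋃ i, Ap i = A) ∧
      ∀ i, M.IsBase ((B \ Bp i) ∪ Ap i) := by
  obtain ⟨F, hF, hFA⟩ := Matroid.PartitionExchange.exists_isPartial_iUnion_eq hE hA hB hBdisj hBun
  exact ⟨F, hF.pairwise_disjoint, hFA, hF.isBase_piece hE hA hB hBdisj hBun hFA⟩
end

section
/- Let M be a matroid on a finite ground set E with rank function r, let Q₁, …, Q_d be subsets of E, and let A ⊆ E. For each i ∈ {1, …, d} define 𝐐_i = {e ∈ E : e belongs to at least i of the sets Q₁, …, Q_d}. Then Σ_{i=1}^d r(A ∩ Q_i) ≥ Σ_{i=1}^d r(A ∩ 𝐐_i). -/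
/-!
Adding the sets `Q_j` one at a time, it suffices to merge a single set `R` into a chain
`T₀ ⊇ T₁ ⊇ ⋯`: the new chain is `T_{i+1} ∪ (T_i ∩ R)`. Submodularity applied to `T_{i+1}` and
`T_i ∩ R` gives `r(T_{i+1} ∪ (T_i ∩ R)) + r(T_{i+1} ∩ R) ≤ r(T_{i+1}) + r(T_i ∩ R)`, and these
inequalities telescope. The argument works for any submodular set function, here
`X ↦ r(A ∩ X)`.
-/

open Set

namespace Matroid

variable {α : Type*} {M : Matroid α} [M.RankFinite]

lemma matroidRank_eq_eRk (X : Set α) : (matroidRank M X : ℕ∞) = M.eRk X := by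
  obtain ⟨I, hI⟩ := M.exists_isBasis' X
  have hgreatest : IsGreatest {n | ∃ J, M.Indep J ∧ J ⊆ X ∧ J.ncard = n} I.ncard := by
    refine ⟨⟨I, hI.indep, hI.subset, rfl⟩, ?_⟩
    rintro _ ⟨J, hJ, hJX, rfl⟩
    have hJI : J.encard ≤ I.encard := hI.encard_eq_eRk ▸ hJ.encard_le_eRk_of_subset hJX
    rwa [← hJ.finite.cast_ncard_eq, ← hI.indep.finite.cast_ncard_eq, Nat.cast_le] at hJI
  rw [matroidRank, hgreatest.csSup_eq, hI.indep.finite.cast_ncard_eq, hI.encard_eq_eRk]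

lemma matroidRank_inter_ground (X : Set α) : matroidRank M (X ∩ M.E) = matroidRank M X := by
  rw [← Nat.cast_inj (R := ℕ∞), matroidRank_eq_eRk, matroidRank_eq_eRk, eRk_inter_ground]

lemma matroidRank_union_add_matroidRank_inter_le (X Y : Set α) :
    matroidRank M (X ∪ Y) + matroidRank M (X ∩ Y) ≤ matroidRank M X + matroidRank M Y := by
  rw [← Nat.cast_le (α := ℕ∞)]
  push_cast
  simp only [matroidRank_eq_eRk]
  rw [add_comm]
  exact M.eRk_inter_add_eRk_union_le X Y

end Matroid

section CoverLevel

variable {α : Type*} {d : ℕ}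

/-- `coverLevel Q k` is `𝐐_k`. -/
def coverLevel (Q : Fin d → Set α) (k : ℕ) : Set α := {e | k ≤ {j | e ∈ Q j}.ncard}

lemma coverLevel_zero (Q : Fin d → Set α) : coverLevel Q 0 = univ := by
  simp [coverLevel]

lemma coverLevel_antitone (Q : Fin d → Set α) : Antitone (coverLevel Q) :=
  fun _ _ hkl _ he => hkl.trans he

lemma coverLevel_eq_empty_of_lt (Q : Fin d → Set α) {k : ℕ} (hk : d < k) :
    coverLevel Q k = ∅ := by
  refine eq_empty_of_forall_notMem fun e he => ?_
  have := ncard_le_card {j | e ∈ Q j}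
  simp only [Nat.card_eq_fintype_card, Fintype.card_fin] at this
  exact (hk.trans_le he).not_ge this

open Classical in
lemma ncard_setOf_mem_fin_succ (Q : Fin (d + 1) → Set α) (e : α) :
    {j | e ∈ Q j}.ncard =
      {j : Fin d | e ∈ Q j.castSucc}.ncard + if e ∈ Q (Fin.last d) then 1 else 0 := by
  simp only [ncard_eq_toFinset_card', toFinset_ofPred, Finset.card_filter, Fin.sum_univ_castSucc]

lemma coverLevel_succ_fin_succ (Q : Fin (d + 1) → Set α) (k : ℕ) :
    coverLevel Q (k + 1) = coverLevel (fun j => Q j.castSucc) (k + 1) ∪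
      (coverLevel (fun j => Q j.castSucc) k ∩ Q (Fin.last d)) := by
  ext e
  simp only [coverLevel, mem_ofPred_eq, mem_union, mem_inter_iff, ncard_setOf_mem_fin_succ]
  split_ifs <;> simp_all; omega

end CoverLevel

section Submodular

variable {α β : Type*} [AddCommMonoid β] [PartialOrder β] [IsOrderedCancelAddMonoid β]

theorem sum_union_inter_add_le_of_submodular {f : Set α → β}
    (hf : ∀ X Y, f (X ∪ Y) + f (X ∩ Y) ≤ f X + f Y) {T : ℕ → Set α} (hT : Antitone T)
    (R : Set α) (n : ℕ) :
    ∑ i ∈ Finset.range n, f (T (i + 1) ∪ (T i ∩ R)) + f (T n ∩ R) ≤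
      ∑ i ∈ Finset.range n, f (T (i + 1)) + f (T 0 ∩ R) := by
  induction n with
  | zero => simp
  | succ n ih =>
    have hstep := hf (T (n + 1)) (T n ∩ R)
    rw [← inter_assoc, inter_eq_left.2 (hT n.le_succ)] at hstep
    rw [Finset.sum_range_succ, Finset.sum_range_succ]
    refine le_of_add_le_add_right (a := f (T n ∩ R)) ?_
    calc _ = (∑ i ∈ Finset.range n, f (T (i + 1) ∪ (T i ∩ R)) + f (T n ∩ R)) +
          (f (T (n + 1) ∪ (T n ∩ R)) + f (T (n + 1) ∩ R)) := by abel
      _ ≤ (∑ i ∈ Finset.range n, f (T (i + 1)) + f (T 0 ∩ R)) +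
          (f (T (n + 1)) + f (T n ∩ R)) := add_le_add ih hstep
      _ = _ := by abel

theorem sum_coverLevel_le_of_submodular {f : Set α → β}
    (hf : ∀ X Y, f (X ∪ Y) + f (X ∩ Y) ≤ f X + f Y) {d : ℕ} (Q : Fin d → Set α) :
    ∑ i : Fin d, f (coverLevel Q (i + 1)) ≤ ∑ i, f (Q i) := by
  induction d with
  | zero => simp
  | succ d ih =>
    obtain ⟨T, hT⟩ : ∃ T, T = coverLevel fun j : Fin d => Q j.castSucc := ⟨_, rfl⟩
    have hmerge := sum_union_inter_add_le_of_submodular hf (hT ▸ coverLevel_antitone _)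
      (Q (Fin.last d)) (d + 1)
    rw [Finset.sum_range_succ (fun i => f (T (i + 1))), hT, coverLevel_zero,
      coverLevel_eq_empty_of_lt _ d.lt_succ_self, empty_inter, univ_inter, add_right_comm,
      ← hT] at hmerge
    calc ∑ i : Fin (d + 1), f (coverLevel Q (i + 1))
        = ∑ i ∈ Finset.range (d + 1), f (T (i + 1) ∪ (T i ∩ Q (Fin.last d))) := by
          rw [← Fin.sum_univ_eq_sum_range]
          simp only [coverLevel_succ_fin_succ, hT]
      _ ≤ ∑ i ∈ Finset.range d, f (T (i + 1)) + f (Q (Fin.last d)) :=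
          le_of_add_le_add_right hmerge
      _ ≤ ∑ i : Fin d, f (Q i.castSucc) + f (Q (Fin.last d)) := by
          rw [← Fin.sum_univ_eq_sum_range (fun i => f (T (i + 1))), hT]
          exact add_le_add_left (ih _) _
      _ = ∑ i, f (Q i) := (Fin.sum_univ_castSucc (f ∘ Q)).symm

end Submodular

theorem rank_sum_ge_chain_rank_sum_general {α : Type*} (M : Matroid α) (hE : M.E.Finite)
    (d : ℕ) (Q : Fin d → Set α) (A : Set α) :
    ∑ i : Fin d,
        matroidRank M (A ∩ {e ∈ M.E | (i : ℕ) + 1 ≤ {j : Fin d | e ∈ Q j}.ncard}) ≤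
      ∑ i : Fin d, matroidRank M (A ∩ Q i) := by
  have : M.Finite := ⟨hE⟩
  have hlevel (i : Fin d) : A ∩ {e ∈ M.E | (i : ℕ) + 1 ≤ {j : Fin d | e ∈ Q j}.ncard} =
      A ∩ coverLevel Q (i + 1) ∩ M.E := by
    ext; simp only [coverLevel, mem_inter_iff, mem_ofPred_eq]; tauto
  have hsubmod (X Y : Set α) : matroidRank M (A ∩ (X ∪ Y)) + matroidRank M (A ∩ (X ∩ Y)) ≤
      matroidRank M (A ∩ X) + matroidRank M (A ∩ Y) := by
    rw [inter_union_distrib_left, inter_inter_distrib_left]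
    exact M.matroidRank_union_add_matroidRank_inter_le _ _
  simp only [hlevel, M.matroidRank_inter_ground]
  exact sum_coverLevel_le_of_submodular (f := fun X => matroidRank M (A ∩ X)) hsubmod Q

/-- Given subsets `Q₁, …, Q_d` of the ground set of a matroid `M` and `A ⊆ E`, with
`𝐐_i = {e ∈ E : e lies in at least i of the Q_j}`, one has
`Σ_i r(A ∩ Q_i) ≥ Σ_i r(A ∩ 𝐐_i)`. (An index `i : Fin d` stands for the value
`i + 1 ∈ {1, …, d}`.) -/
theorem rank_sum_ge_chain_rank_sum {α : Type*} (M : Matroid α) (hE : M.E.Finite)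
    (d : ℕ) (Q : Fin d → Set α) (hQ : ∀ i, Q i ⊆ M.E) (A : Set α) (hA : A ⊆ M.E) :
    ∑ i : Fin d,
        matroidRank M (A ∩ {e ∈ M.E | (i : ℕ) + 1 ≤ {j : Fin d | e ∈ Q j}.ncard}) ≤
      ∑ i : Fin d, matroidRank M (A ∩ Q i) :=
  rank_sum_ge_chain_rank_sum_general M hE d Q A
end

section
/- Let M be a matroid on a finite ground set E with rank function r, and let a, b be positive integers. Then E admits an a-covering by b independent sets of M if and only if b · r(A) ≥ a · |A| for every subset A ⊆ E. -/
open Set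

namespace Matroid
variable {α : Type*} {M M₁ M₂ : Matroid α} {e : α} {A B X D : Set α}

lemma delete_eRk_eq_of_disjoint (hXD : Disjoint X D) : (M ＼ D).eRk X = M.eRk X := by
  rw [delete_eq_restrict, restrict_eRk_eq', ← inter_sdiff_assoc,
    sdiff_eq_left.2 (hXD.mono_left inter_subset_left), eRk_inter_ground]

lemma IsLoop.eRk_insert (he : M.IsLoop e) (X : Set α) : M.eRk (insert e X) = M.eRk X := by
  rw [insert_eq, union_comm, eRk_eq_eRk_union_eRk_le_zero _ he.eRk_eq.le]

lemma IsNonloop.eRk_insert_le_contract_eRk_add_one (he : M.IsNonloop e) (X : Set α) :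
    M.eRk (insert e X) ≤ (M ／ {e}).eRk X + 1 := by
  obtain ⟨I, hI, heI⟩ :=
    he.indep.subset_isBasis'_of_subset (singleton_subset_iff.2 (mem_insert e X))
  rw [← hI.encard_eq_eRk, ← encard_sdiff_singleton_add_one (heI rfl)]
  gcongr
  refine (hI.indep.diff_indep_contract_of_subset heI).encard_le_eRk_of_subset fun x hx ↦ ?_
  exact (hI.subset hx.1).resolve_left hx.2

lemma two_mul_le_of_forall_le_eRk_add_eRk {k : ℕ∞}
    (h : ∀ A ⊆ M₁.E, k ≤ M₁.eRk A + M₂.eRk (M₁.E \ A)) (he : e ∈ M₁.E)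
    (hA : A ⊆ M₁.E \ {e}) (hB : B ⊆ M₁.E \ {e}) :
    2 * k ≤ (M₁.eRk A + M₂.eRk ((M₁.E \ {e}) \ A)) +
      (M₁.eRk (insert e B) + M₂.eRk (M₁.E \ B)) := by
  have heA : e ∉ A := fun h ↦ (hA h).2 rfl
  have heB : e ∉ B := fun h ↦ (hB h).2 rfl
  have hAE : A ⊆ M₁.E := hA.trans sdiff_subset
  have hBE : B ⊆ M₁.E := hB.trans sdiff_subset
  have hinter := h (A ∩ B) (inter_subset_left.trans hAE)
  have hunion := h (insert e (A ∪ B)) (insert_subset he (union_subset hAE hBE))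
  have hsub₁ := M₁.eRk_inter_add_eRk_union_le A (insert e B)
  have hsub₂ := M₂.eRk_inter_add_eRk_union_le ((M₁.E \ {e}) \ A) (M₁.E \ B)
  rw [inter_insert_of_notMem heA, union_insert] at hsub₁
  rw [show (M₁.E \ {e}) \ A ∩ (M₁.E \ B) = M₁.E \ insert e (A ∪ B) by ext; simp; tauto,
    show (M₁.E \ {e}) \ A ∪ (M₁.E \ B) = M₁.E \ (A ∩ B) by ext x; simp; grind] at hsub₂
  calc 2 * k ≤ (M₁.eRk (A ∩ B) + M₂.eRk (M₁.E \ (A ∩ B))) +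
        (M₁.eRk (insert e (A ∪ B)) + M₂.eRk (M₁.E \ insert e (A ∪ B))) := by
        rw [two_mul]; exact add_le_add hinter hunion
    _ = (M₁.eRk (A ∩ B) + M₁.eRk (insert e (A ∪ B))) +
        (M₂.eRk (M₁.E \ insert e (A ∪ B)) + M₂.eRk (M₁.E \ (A ∩ B))) := by ring
    _ ≤ (M₁.eRk A + M₁.eRk (insert e B)) + (M₂.eRk ((M₁.E \ {e}) \ A) + M₂.eRk (M₁.E \ B)) :=
        add_le_add hsub₁ hsub₂
    _ = _ := by ring

lemma forall_le_delete_eRk_add_eRk_of_isLoop {k : ℕ∞} (hE : M₁.E = M₂.E)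
    (h : ∀ A ⊆ M₁.E, k ≤ M₁.eRk A + M₂.eRk (M₁.E \ A)) (he : M₁.IsLoop e ∨ M₂.IsLoop e) :
    ∀ A ⊆ (M₁ ＼ {e}).E, k ≤ (M₁ ＼ {e}).eRk A + (M₂ ＼ {e}).eRk ((M₁ ＼ {e}).E \ A) := by
  intro A hA
  have heE : e ∈ M₁.E := by rcases he with he | he; exacts [he.mem_ground, hE ▸ he.mem_ground]
  have heA : e ∉ A := fun h ↦ (hA h).2 rfl
  rw [delete_ground, delete_eRk_eq_of_disjoint (disjoint_singleton_right.2 heA),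
    delete_eRk_eq_of_disjoint (disjoint_singleton_right.2 fun h ↦ h.1.2 rfl)]
  rcases he with he | he
  · rw [← he.eRk_insert A]
    convert h (insert e A) (insert_subset heE (hA.trans sdiff_subset)) using 3
    ext; simp; tauto
  · have := h A (hA.trans sdiff_subset)
    rwa [← he.eRk_insert, show insert e ((M₁.E \ {e}) \ A) = M₁.E \ A by ext; simp; grind]

theorem exists_common_indep_of_forall_le_eRk_add_eRk (hE : M₁.E = M₂.E) (hfin : M₁.E.Finite)
    (k : ℕ) (h : ∀ A ⊆ M₁.E, (k : ℕ∞) ≤ M₁.eRk A + M₂.eRk (M₁.E \ A)) :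
    ∃ I, M₁.Indep I ∧ M₂.Indep I ∧ (k : ℕ∞) ≤ I.encard := by
  obtain ⟨n, hn⟩ : ∃ n, M₁.E.ncard = n := ⟨_, rfl⟩
  induction n generalizing M₁ M₂ k with
  | zero =>
    rw [ncard_eq_zero hfin] at hn
    refine ⟨∅, M₁.empty_indep, M₂.empty_indep, ?_⟩
    simpa [hn] using h ∅ (empty_subset _)
  | succ n ih =>
  obtain ⟨e, he⟩ : M₁.E.Nonempty := nonempty_of_ncard_ne_zero (by omega)
  have hfin' : (M₁.E \ {e}).Finite := hfin.sdiff
  have hn' : (M₁.E \ {e}).ncard = n := by rw [ncard_sdiff_singleton_of_mem he, hn]; rfl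
  by_cases hdel : ∀ A ⊆ (M₁ ＼ {e}).E,
      (k : ℕ∞) ≤ (M₁ ＼ {e}).eRk A + (M₂ ＼ {e}).eRk ((M₁ ＼ {e}).E \ A)
  · obtain ⟨I, hI₁, hI₂, hIk⟩ := ih (by simp [hE]) hfin' k hdel hn'
    exact ⟨I, hI₁.of_delete, hI₂.of_delete, hIk⟩
  have he₁ : M₁.IsNonloop e := by
    refine (M₁.isLoop_or_isNonloop e).resolve_left fun hl ↦ hdel ?_
    exact forall_le_delete_eRk_add_eRk_of_isLoop hE h (.inl hl)
  have he₂ : M₂.IsNonloop e := by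
    refine (M₂.isLoop_or_isNonloop e).resolve_left fun hl ↦ hdel ?_
    exact forall_le_delete_eRk_add_eRk_of_isLoop hE h (.inr hl)
  by_cases hcon : ∀ B ⊆ (M₁ ／ {e}).E,
      ((k - 1 : ℕ) : ℕ∞) ≤ (M₁ ／ {e}).eRk B + (M₂ ／ {e}).eRk ((M₁ ／ {e}).E \ B)
  · obtain ⟨I, hI₁, hI₂, hIk⟩ := ih (by simp [hE]) hfin' (k - 1) hcon hn'
    rw [he₁.contractElem_indep_iff] at hI₁
    rw [he₂.contractElem_indep_iff] at hI₂
    refine ⟨insert e I, hI₁.2, hI₂.2, ?_⟩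
    rw [encard_insert_of_notMem hI₁.1]
    calc (k : ℕ∞) ≤ ((k - 1 : ℕ) : ℕ∞) + 1 := by norm_cast; omega
      _ ≤ I.encard + 1 := by gcongr
  push Not at hdel hcon
  obtain ⟨A, hA, hAk⟩ := hdel
  obtain ⟨B, hB, hBk⟩ := hcon
  rw [delete_ground] at hA hAk
  rw [contract_ground] at hB hBk
  rw [delete_eRk_eq_of_disjoint (disjoint_singleton_right.2 fun h ↦ (hA h).2 rfl),
    delete_eRk_eq_of_disjoint (disjoint_singleton_right.2 fun h ↦ h.1.2 rfl)] at hAk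
  have hB' : M₁.eRk (insert e B) + M₂.eRk (M₁.E \ B) ≤
      (M₁ ／ {e}).eRk B + (M₂ ／ {e}).eRk ((M₁.E \ {e}) \ B) + 2 := by
    have h₂ := he₂.eRk_insert_le_contract_eRk_add_one ((M₁.E \ {e}) \ B)
    rw [show insert e ((M₁.E \ {e}) \ B) = M₁.E \ B by ext; simp; grind] at h₂
    calc _ ≤ ((M₁ ／ {e}).eRk B + 1) + ((M₂ ／ {e}).eRk ((M₁.E \ {e}) \ B) + 1) :=
          add_le_add (he₁.eRk_insert_le_contract_eRk_add_one B) h₂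
      _ = _ := by ring
  have huncross := two_mul_le_of_forall_le_eRk_add_eRk h he hA hB
  -- `enat_to_nat` only case-splits atoms, so the three sums are named first.
  generalize M₁.eRk A + M₂.eRk ((M₁.E \ {e}) \ A) = x at hAk huncross
  generalize M₁.eRk (insert e B) + M₂.eRk (M₁.E \ B) = y at hB' huncross
  generalize (M₁ ／ {e}).eRk B + (M₂ ／ {e}).eRk ((M₁.E \ {e}) \ B) = z at hB' hBk
  enat_to_nat
  omega

lemma card_mul_eRk_le_eRk_sum'_univ_prod {ι : Type*} [Fintype ι] (M : Matroid α) (X : Set α) :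
    (Fintype.card ι : ℕ∞) * M.eRk X ≤ (Matroid.sum' fun _ : ι ↦ M).eRk (univ ×ˢ X) := by
  obtain ⟨I, hI⟩ := M.exists_isBasis' X
  have hindep : (Matroid.sum' fun _ : ι ↦ M).Indep (univ ×ˢ I) := by
    simpa [sum'_indep_iff, mk_preimage_prod_right] using fun _ ↦ hI.indep
  rw [← hI.encard_eq_eRk, ← ENat.card_eq_coe_fintype_card, ← encard_univ, ← encard_prod]
  exact hindep.encard_le_eRk_of_subset (prod_mono subset_rfl hI.subset)

theorem exists_coloring_indep_of_forall_encard_le {ι : Type*} [Fintype ι] [Nonempty ι]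
    (hfin : M.E.Finite) (h : ∀ X ⊆ M.E, X.encard ≤ Fintype.card ι * M.eRk X) :
    ∃ c : α → ι, ∀ i, M.Indep {x ∈ M.E | c x = i} := by
  set M₁ := Matroid.sum' fun _ : ι ↦ M
  set M₂ := (freeOn M.E).comap (Prod.snd : ι × α → α)
  have hE₁ : M₁.E = univ ×ˢ M.E := by ext ⟨i, x⟩; simp [M₁]
  have hE : M₁.E = M₂.E := by ext ⟨i, x⟩; simp [M₁, M₂]
  have hbound : ∀ A ⊆ M₁.E, (M.E.ncard : ℕ∞) ≤ M₁.eRk A + M₂.eRk (M₁.E \ A) := by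
    intro A hA
    set X := {x ∈ M.E | ∀ i, (i, x) ∈ A}
    have hX : X.encard ≤ M₁.eRk A :=
      (h X (sep_subset _ _)).trans ((card_mul_eRk_le_eRk_sum'_univ_prod M X).trans
        (M₁.eRk_mono fun p hp ↦ hp.2.2 p.1))
    have hXc : (M.E \ X).encard ≤ M₂.eRk (M₁.E \ A) := by
      rw [eRk_comap, eRk_freeOn (by rintro _ ⟨p, hp, rfl⟩; exact (hE₁ ▸ hp.1).2)]
      refine encard_le_encard ?_
      rintro x ⟨hx, hxX⟩
      obtain ⟨i, hi⟩ : ∃ i, (i, x) ∉ A := by simpa [X, hx] using hxX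
      exact ⟨(i, x), ⟨hE₁ ▸ ⟨mem_univ i, hx⟩, hi⟩, rfl⟩
    rw [hfin.cast_ncard_eq, ← encard_sdiff_add_encard_of_subset (sep_subset M.E _), add_comm]
    exact add_le_add hX hXc
  obtain ⟨I, hI₁, hI₂, hIcard⟩ :=
    exists_common_indep_of_forall_le_eRk_add_eRk hE (hE₁ ▸ finite_univ.prod hfin) _ hbound
  rw [comap_indep_iff, freeOn_indep_iff] at hI₂
  have hsnd : Prod.snd '' I = M.E := by
    refine (hfin.subset hI₂.1).eq_of_subset_of_encard_le hI₂.1 ?_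
    rwa [hI₂.2.encard_image, ← hfin.cast_ncard_eq]
  refine ⟨fun x ↦ Classical.epsilon fun i ↦ (i, x) ∈ I, fun i ↦ ?_⟩
  refine (sum'_indep_iff.1 hI₁ i).subset ?_
  rintro x ⟨hx, rfl⟩
  obtain ⟨p, hp, rfl⟩ := hsnd ▸ hx
  exact Classical.epsilon_spec (p := fun i ↦ (i, p.2) ∈ I) ⟨p.1, hp⟩

lemma mul_encard_le_card_mul_eRk {ι : Type*} [Fintype ι] {V : ι → Set α}
    (hV : ∀ i, M.Indep (V i)) {a : ℕ} (hA : A.Finite) (hcov : ∀ e ∈ A, {i | e ∈ V i}.ncard = a) :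
    (a : ℕ∞) * A.encard ≤ Fintype.card ι * M.eRk A := by
  classical
  obtain ⟨s, rfl⟩ := hA.exists_finset_coe
  let r : α → ι → Prop := fun e i ↦ e ∈ V i
  have hcount : ∑ e ∈ s, (Finset.univ.bipartiteAbove r e).card = a * s.card := by
    rw [Finset.sum_congr rfl fun e he ↦ ?_, Finset.sum_const, smul_eq_mul, mul_comm]
    rw [← hcov e he, ← ncard_coe_finset]
    simp [r, Finset.bipartiteAbove]
  calc (a : ℕ∞) * (s : Set α).encard
      = ∑ i, ((s.bipartiteBelow r i).card : ℕ∞) := by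
        rw [encard_coe_eq_coe_finsetCard]
        exact_mod_cast hcount.symm.trans
          (Finset.sum_card_bipartiteAbove_eq_sum_card_bipartiteBelow r)
    _ ≤ ∑ _i : ι, M.eRk s := by
        refine Finset.sum_le_sum fun i _ ↦ ?_
        rw [← encard_coe_eq_coe_finsetCard]
        refine ((hV i).subset ?_).encard_le_eRk_of_subset ?_ <;>
          simp +contextual [r, Finset.bipartiteBelow, subset_def]
    _ = Fintype.card ι * M.eRk s := by simp

lemma encard_le_card_mul_encard_image_fst {κ : Type*} [Fintype κ] (X : Set (α × κ)) :
    X.encard ≤ Fintype.card κ * (Prod.fst '' X).encard := by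
  rw [← ENat.card_eq_coe_fintype_card, ← encard_univ, mul_comm, ← encard_prod]
  exact encard_le_encard fun p hp ↦ ⟨mem_image_of_mem _ hp, mem_univ _⟩

theorem exists_cover_of_forall_mul_encard_le {ι κ : Type*} [Fintype ι] [Nonempty ι] [Fintype κ]
    (hfin : M.E.Finite)
    (h : ∀ A ⊆ M.E, (Fintype.card κ : ℕ∞) * A.encard ≤ Fintype.card ι * M.eRk A) :
    ∃ V : ι → Set α, (∀ i, M.Indep (V i)) ∧
      ∀ e ∈ M.E, {i | e ∈ V i}.ncard = Fintype.card κ := by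
  set N := M.comap (Prod.fst : α × κ → α)
  have hNfin : N.E.Finite := (hfin.prod (finite_univ (α := κ))).subset fun p hp ↦ ⟨hp, trivial⟩
  obtain ⟨c, hc⟩ := exists_coloring_indep_of_forall_encard_le hNfin fun X hX ↦
    calc X.encard ≤ Fintype.card κ * (Prod.fst '' X).encard :=
          encard_le_card_mul_encard_image_fst X
      _ ≤ Fintype.card ι * M.eRk (Prod.fst '' X) := h _ (image_subset_iff.2 hX)
      _ = Fintype.card ι * N.eRk X := by rw [eRk_comap]
  refine ⟨fun i ↦ Prod.fst '' {p ∈ N.E | c p = i}, fun i ↦ (comap_indep_iff.1 (hc i)).1,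
    fun e he ↦ ?_⟩
  have hinj : Function.Injective fun j : κ ↦ c (e, j) := fun j j' hjj' ↦ by
    simpa using (comap_indep_iff.1 (hc (c (e, j')))).2 ⟨he, hjj'⟩ ⟨he, rfl⟩ rfl
  have hrange : {i | e ∈ Prod.fst '' {p ∈ N.E | c p = i}} = range fun j ↦ c (e, j) := by
    ext i; simp [N, he]
  rw [hrange, ncard_range_of_injective hinj, Nat.card_eq_fintype_card]

end Matroid

lemma cast_matroidRank_eq_eRk {α : Type*} {M : Matroid α} {A : Set α} (hA : A.Finite) :
    (matroidRank M A : ℕ∞) = M.eRk A := by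
  obtain ⟨I, hI⟩ := M.exists_isBasis' A
  have hIfin : I.Finite := hA.subset hI.subset
  have hmax : IsGreatest {n | ∃ J, M.Indep J ∧ J ⊆ A ∧ J.ncard = n} I.ncard := by
    refine ⟨⟨I, hI.indep, hI.subset, rfl⟩, ?_⟩
    rintro _ ⟨J, hJ, hJA, rfl⟩
    have := hJ.encard_le_eRk_of_subset hJA
    rwa [hI.eRk_eq_encard, ← (hA.subset hJA).cast_ncard_eq, ← hIfin.cast_ncard_eq,
      Nat.cast_le] at this
  rw [matroidRank, hmax.csSup_eq, hIfin.cast_ncard_eq, hI.eRk_eq_encard]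

theorem aCovering_iff_rank_general {α : Type*} (M : Matroid α) (hE : M.E.Finite)
    (a b : ℕ) (hb : 0 < b) :
    (∃ V : Fin b → Set α, (∀ i, M.Indep (V i)) ∧
        ∀ e ∈ M.E, {i : Fin b | e ∈ V i}.ncard = a) ↔
      ∀ A ⊆ M.E, a * A.ncard ≤ b * matroidRank M A := by
  have hrank : ∀ A ⊆ M.E, a * A.ncard ≤ b * matroidRank M A ↔
      (Fintype.card (Fin a) : ℕ∞) * A.encard ≤ Fintype.card (Fin b) * M.eRk A := by
    intro A hA
    rw [Fintype.card_fin, Fintype.card_fin, ← (hE.subset hA).cast_ncard_eq,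
      ← cast_matroidRank_eq_eRk (hE.subset hA)]
    norm_cast
  constructor
  · rintro ⟨V, hV, hcov⟩ A hA
    refine (hrank A hA).2 ?_
    simpa using Matroid.mul_encard_le_card_mul_eRk hV (hE.subset hA) fun e he ↦ hcov e (hA he)
  · intro h
    have : Nonempty (Fin b) := ⟨⟨0, hb⟩⟩
    simpa using Matroid.exists_cover_of_forall_mul_encard_le (κ := Fin a) hE
      fun A hA ↦ (hrank A hA).1 (h A hA)

/-- **Edmonds' formula, fractional form.** A matroid `M` on a finite ground set `E`
admits an `a`-covering of `E` by `b` independent sets iff `b · r(A) ≥ a · |A|` for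
every `A ⊆ E`. -/
theorem aCovering_iff_rank {α : Type*} (M : Matroid α) (hE : M.E.Finite)
    (a b : ℕ) (ha : 0 < a) (hb : 0 < b) :
    (∃ V : Fin b → Set α, (∀ i, M.Indep (V i)) ∧
        ∀ e ∈ M.E, {i : Fin b | e ∈ V i}.ncard = a) ↔
      ∀ A ⊆ M.E, a * A.ncard ≤ b * matroidRank M A :=
  aCovering_iff_rank_general M hE a b hb
end

section
/- Let M be a matroid on a finite ground set E, and let a, b be positive integers such that E admits an a-covering by b independent sets of M. Then for every list assignment L on E with |L(e)| = 2b for all e ∈ E, one can choose for each e ∈ E a subset L'(e) ⊆ L(e) with |L'(e)| = 2a such that for every color i ∈ ℕ, the set {e ∈ E : i ∈ L'(e)} is independent in M. -/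
/-!
Rado's theorem turns the statement into a transversal problem. Take `k * a` copies of every
element `e` (here `k = 2`) and let each copy of `e` pick a pair `(c, e)` with `c ∈ L e`; the picks
must be distinct and independent in the direct sum, over all colours `c`, of copies of `M`, i.e.
every colour class is independent. The Hall–Rado condition holds since the covering gives
`a * |Z| ≤ b * r(Z)` for all `Z ⊆ E`: summing over colours, the pairs above a set `Y` of elements
have rank at least `(a / b) * ∑_{e ∈ Y} |L e| ≥ k * a * |Y|`.
-/

open Finset Function

section Rado

variable {ι β : Type*} [DecidableEq β]

def HallRadoCondition (ρ : Finset β → ℕ) (A : ι → Finset β) : Prop :=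
  ∀ T : Finset ι, #T ≤ ρ (T.biUnion A)

variable {ρ : Finset β → ℕ} {A : ι → Finset β}

lemma HallRadoCondition.exists_transversal_of_card_le_one [Fintype ι]
    (hA : HallRadoCondition ρ A) (hρ : ∀ X, ρ X ≤ #X) (h1 : ∀ i, #(A i) ≤ 1) :
    ∃ f : ι → β, (∀ i, f i ∈ A i) ∧ Injective f ∧ Fintype.card ι ≤ ρ (univ.image f) := by
  classical
  have hsingle : ∀ i, ∃ x, A i = {x} := fun i =>
    card_eq_one.mp <| (h1 i).antisymm <| by simpa using (hA {i}).trans (hρ _)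
  choose f hf using hsingle
  have himage : univ.image f = univ.biUnion A := by ext; simp [hf, eq_comm]
  refine ⟨f, fun i => by simp [hf], fun i j hij => ?_, by simpa [himage] using hA univ⟩
  by_contra hne
  have := (hA {i, j}).trans (hρ _)
  simp [hf, hij, card_pair hne] at this

lemma Finset.mem_biUnion_update_erase [DecidableEq ι] {T : Finset ι} {i₀ : ι} {z b : β} :
    b ∈ T.biUnion (update A i₀ ((A i₀).erase z)) ↔ ∃ i ∈ T, b ∈ A i ∧ (i = i₀ → b ≠ z) := by
  simp only [mem_biUnion, update_apply]
  refine exists_congr fun i => and_congr_right fun _ => ?_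
  split_ifs with h <;> simp [h, and_comm]

/-- If deleting `x` and deleting `y` from `A i₀` both broke the condition, at sets `Tx ∋ i₀` and
`Ty ∋ i₀`, then submodularity at the two unions `Px`, `Py` would give
`#(Tx ∪ Ty) + #(Tx ∩ Ty) - 1 ≤ ρ Px + ρ Py ≤ #Tx + #Ty - 2`. -/
lemma HallRadoCondition.exists_update_erase [DecidableEq ι] (hA : HallRadoCondition ρ A)
    (hmono : Monotone ρ) (hsub : ∀ X Y, ρ (X ∪ Y) + ρ (X ∩ Y) ≤ ρ X + ρ Y) {i₀ : ι}
    (h : 1 < #(A i₀)) :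
    ∃ x ∈ A i₀, HallRadoCondition ρ (update A i₀ ((A i₀).erase x)) := by
  obtain ⟨x, hx, y, hy, hxy⟩ := one_lt_card.mp h
  by_contra! hfail
  have violator : ∀ z ∈ A i₀,
      ∃ T, ρ (T.biUnion (update A i₀ ((A i₀).erase z))) < #T ∧ i₀ ∈ T := by
    intro z hz
    obtain ⟨T, hT⟩ : ∃ T, ρ (T.biUnion (update A i₀ ((A i₀).erase z))) < #T := by
      simpa [HallRadoCondition] using hfail z hz
    refine ⟨T, hT, by_contra fun hi => (hA T).not_gt (hT.trans_le' (hmono ?_))⟩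
    intro b hb
    obtain ⟨i, hiT, hbi⟩ := mem_biUnion.mp hb
    exact mem_biUnion_update_erase.mpr ⟨i, hiT, hbi, fun h => absurd (h ▸ hiT) hi⟩
  obtain ⟨Tx, hTx, hxT⟩ := violator x hx
  obtain ⟨Ty, hTy, hyT⟩ := violator y hy
  set Px := Tx.biUnion (update A i₀ ((A i₀).erase x))
  set Py := Ty.biUnion (update A i₀ ((A i₀).erase y))
  have hunion : (Tx ∪ Ty).biUnion A ⊆ Px ∪ Py := by
    intro b hb
    obtain ⟨i, hi, hbi⟩ := mem_biUnion.mp hb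
    rw [mem_union, mem_biUnion_update_erase, mem_biUnion_update_erase]
    by_cases hii : i = i₀
    · subst hii
      by_cases hbx : b = x
      · exact .inr ⟨i, hyT, hbi, fun _ => hbx ▸ hxy⟩
      · exact .inl ⟨i, hxT, hbi, fun _ => hbx⟩
    · rcases mem_union.mp hi with hi | hi
      · exact .inl ⟨i, hi, hbi, fun h => absurd h hii⟩
      · exact .inr ⟨i, hi, hbi, fun h => absurd h hii⟩
  have hinter : ((Tx ∩ Ty).erase i₀).biUnion A ⊆ Px ∩ Py := by
    intro b hb
    obtain ⟨i, hi, hbi⟩ := mem_biUnion.mp hb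
    obtain ⟨hii, hi⟩ := mem_erase.mp hi
    rw [mem_inter, mem_biUnion_update_erase, mem_biUnion_update_erase]
    exact ⟨⟨i, (mem_inter.mp hi).1, hbi, fun h => absurd h hii⟩,
      ⟨i, (mem_inter.mp hi).2, hbi, fun h => absurd h hii⟩⟩
  have hi₀ : i₀ ∈ Tx ∩ Ty := mem_inter.mpr ⟨hxT, hyT⟩
  have := (hA _).trans (hmono hunion)
  have := (hA _).trans (hmono hinter)
  have := hsub Px Py
  have := card_union_add_card_inter Tx Ty
  have := card_erase_of_mem hi₀
  have := card_pos.mpr ⟨i₀, hi₀⟩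
  omega

theorem HallRadoCondition.exists_injective_transversal [Fintype ι] (hA : HallRadoCondition ρ A)
    (hmono : Monotone ρ) (hsub : ∀ X Y, ρ (X ∪ Y) + ρ (X ∩ Y) ≤ ρ X + ρ Y)
    (hρ : ∀ X, ρ X ≤ #X) :
    ∃ f : ι → β, (∀ i, f i ∈ A i) ∧ Injective f ∧ Fintype.card ι ≤ ρ (univ.image f) := by
  classical
  induction hn : ∑ i, #(A i) using Nat.strong_induction_on generalizing A with
  | _ n ih =>
  by_cases h1 : ∀ i, #(A i) ≤ 1
  · exact hA.exists_transversal_of_card_le_one hρ h1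
  obtain ⟨i₀, hi₀⟩ : ∃ i₀, 1 < #(A i₀) := by simpa using h1
  obtain ⟨x, hx, hA'⟩ := hA.exists_update_erase hmono hsub hi₀
  have hsubset : ∀ i, update A i₀ ((A i₀).erase x) i ⊆ A i := by
    intro i
    rcases eq_or_ne i i₀ with rfl | hi
    · simpa using erase_subset x (A i)
    · simp [hi]
  have hlt : ∑ i, #(update A i₀ ((A i₀).erase x) i) < n := hn ▸
    sum_lt_sum (fun i _ => card_le_card (hsubset i))
      ⟨i₀, mem_univ _, by simpa using card_erase_lt_of_mem hx⟩
  obtain ⟨f, hfA, hf⟩ := ih _ hlt hA' rfl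
  exact ⟨f, fun i => hsubset i (hfA i), hf⟩

end Rado

namespace Matroid

variable {α : Type*}

/-- Rado's theorem. -/
theorem exists_injective_indep_transversal {ι β : Type*} [Finite ι] [DecidableEq β]
    (N : Matroid β) (A : ι → Finset β)
    (hA : ∀ T : Finset ι, (#T : ℕ∞) ≤ N.eRk ↑(T.biUnion A)) :
    ∃ f : ι → β, (∀ i, f i ∈ A i) ∧ Injective f ∧ N.Indep (Set.range f) := by
  have := Fintype.ofFinite ι
  have hρ : ∀ X : Finset β, ((N.eRk X).toNat : ℕ∞) = N.eRk X := fun X =>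
    ENat.natCast_toNat (N.isRkFinite_of_finite X.finite_toSet).eRk_lt_top.ne
  obtain ⟨f, hfA, hf, hcard⟩ :=
    HallRadoCondition.exists_injective_transversal (ρ := fun X => (N.eRk X).toNat) (A := A)
      (fun T => by rw [← Nat.cast_le (α := ℕ∞), hρ]; exact hA T)
      (fun X Y h => by
        rw [← Nat.cast_le (α := ℕ∞), hρ, hρ]
        exact N.eRk_mono (coe_subset.mpr h))
      (fun X Y => by
        rw [← Nat.cast_le (α := ℕ∞), Nat.cast_add, Nat.cast_add, hρ, hρ, hρ, hρ, coe_union,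
          coe_inter, add_comm (N.eRk _)]
        exact N.eRk_submod _ _)
      (fun X => by
        rw [← Nat.cast_le (α := ℕ∞), hρ, ← Set.encard_coe_eq_coe_finsetCard]
        exact N.eRk_le_encard _)
  refine ⟨f, hfA, hf, ?_⟩
  rw [← Set.image_univ, ← coe_univ, ← coe_image]
  refine (N.isRkFinite_of_finite (finite_toSet _)).indep_of_encard_le_eRk ?_
  rw [Set.encard_coe_eq_coe_finsetCard, card_image_of_injective _ hf, ← hρ, card_univ]
  exact_mod_cast hcard

lemma sum_eRk_preimage_le_eRk_sum' {κ : Type*} (M : κ → Matroid α) (C : Finset κ)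
    (X : Finset (κ × α)) :
    ∑ c ∈ C, (M c).eRk (Prod.mk c ⁻¹' ↑X) ≤ (Matroid.sum' M).eRk ↑X := by
  classical
  choose I hI using fun c => ((M c).isRkFinite_of_finite
    (X.finite_toSet.preimage (Prod.mk_right_injective c).injOn)).exists_finset_isBasis'
  set J := C.biUnion fun c => (I c).map ⟨Prod.mk c, Prod.mk_right_injective c⟩
  have hJ : ∀ c e, (c, e) ∈ J ↔ c ∈ C ∧ e ∈ I c := by simp [J]
  have hJindep : (Matroid.sum' M).Indep ↑J :=
    sum'_indep_iff.mpr fun c => (hI c).indep.subset fun e he => ((hJ c e).mp he).2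
  have hJX : (↑J : Set (κ × α)) ⊆ ↑X := by
    rintro ⟨c, e⟩ he
    exact (hI c).subset ((hJ c e).mp he).2
  calc ∑ c ∈ C, (M c).eRk (Prod.mk c ⁻¹' ↑X) = ∑ c ∈ C, (#(I c) : ℕ∞) :=
        sum_congr rfl fun c _ => by
          rw [← (hI c).encard_eq_eRk, Set.encard_coe_eq_coe_finsetCard]
    _ = (↑J : Set (κ × α)).encard := by
        rw [Set.encard_coe_eq_coe_finsetCard, card_biUnion]
        · simp
        · intro c _ c' _ hcc'
          simp only [onFun, disjoint_left, mem_map]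
          rintro _ ⟨e, -, rfl⟩ ⟨e', -, he'⟩
          exact hcc' (congrArg Prod.fst he').symm
    _ ≤ (Matroid.sum' M).eRk ↑X := hJindep.encard_le_eRk_of_subset hJX

lemma mul_card_le_mul_eRk_of_covering {ι : Type*} [Fintype ι] (M : Matroid α)
    (V : ι → Set α) (hV : ∀ i, M.Indep (V i)) (a : ℕ) (Z : Finset α)
    (hZ : ∀ e ∈ Z, a ≤ {i | e ∈ V i}.ncard) :
    (a * #Z : ℕ∞) ≤ Fintype.card ι * M.eRk ↑Z := by
  classical
  have hcount : a * #Z ≤ ∑ i, #{e ∈ Z | e ∈ V i} := calc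
    a * #Z = ∑ _e ∈ Z, a := by simp [mul_comm]
    _ ≤ ∑ e ∈ Z, #{i | e ∈ V i} := sum_le_sum fun e he => by
        simpa [Set.ncard_eq_toFinset_card'] using hZ e he
    _ = ∑ i, #{e ∈ Z | e ∈ V i} :=
        sum_card_bipartiteAbove_eq_sum_card_bipartiteBelow (fun e i => e ∈ V i)
  calc (a * #Z : ℕ∞) ≤ ∑ i, (#{e ∈ Z | e ∈ V i} : ℕ∞) := by exact_mod_cast hcount
    _ ≤ ∑ _i : ι, M.eRk ↑Z := sum_le_sum fun i _ => by
        rw [← Set.encard_coe_eq_coe_finsetCard]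
        exact ((hV i).subset fun _ h => (mem_filter.mp h).2).encard_le_eRk_of_subset
          fun _ h => (mem_filter.mp h).1
    _ = Fintype.card ι * M.eRk ↑Z := by simp

lemma mul_card_le_eRk_sum'_of_covering {ι γ : Type*} [Fintype ι] [DecidableEq α] [DecidableEq γ]
    (M : Matroid α) (V : ι → Set α) (hV : ∀ i, M.Indep (V i)) (a k : ℕ) (L : α → Finset γ)
    (Y : Finset α) (hcov : ∀ e ∈ Y, a ≤ {i | e ∈ V i}.ncard)
    (hL : ∀ e ∈ Y, k * Fintype.card ι ≤ #(L e)) :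
    (k * a * #Y : ℕ∞) ≤
      (Matroid.sum' fun _ : γ => M).eRk ↑(Y.biUnion fun e => (L e).image (·, e)) := by
  set X := Y.biUnion fun e => (L e).image (·, e)
  set C := Y.biUnion L
  have hfiber : ∀ c, Prod.mk c ⁻¹' (X : Set (γ × α)) = ↑{e ∈ Y | c ∈ L e} := by
    intro c; ext e; simp [X, and_comm]
  have hcount : k * Fintype.card ι * #Y ≤ ∑ c ∈ C, #{e ∈ Y | c ∈ L e} := calc
    k * Fintype.card ι * #Y = ∑ _e ∈ Y, k * Fintype.card ι := by simp [mul_comm]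
    _ ≤ ∑ e ∈ Y, #(L e) := sum_le_sum hL
    _ = ∑ e ∈ Y, #{c ∈ C | c ∈ L e} := sum_congr rfl fun e he => by
        rw [filter_mem_eq_inter, inter_eq_right.mpr (subset_biUnion_of_mem L he)]
    _ = ∑ c ∈ C, #{e ∈ Y | c ∈ L e} :=
        sum_card_bipartiteAbove_eq_sum_card_bipartiteBelow (fun e c => c ∈ L e)
  have hclass : ∀ c, (a * #{e ∈ Y | c ∈ L e} : ℕ∞) ≤
      Fintype.card ι * M.eRk ↑{e ∈ Y | c ∈ L e} := fun c =>
    mul_card_le_mul_eRk_of_covering M V hV a _ fun e he => hcov e (mem_filter.mp he).1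
  have key : (Fintype.card ι : ℕ∞) * (k * a * #Y) ≤
      Fintype.card ι * (Matroid.sum' fun _ : γ => M).eRk ↑X := calc
    (Fintype.card ι : ℕ∞) * (k * a * #Y) = a * ((k * Fintype.card ι * #Y : ℕ) : ℕ∞) := by
        push_cast; ring
    _ ≤ a * ∑ c ∈ C, (#{e ∈ Y | c ∈ L e} : ℕ∞) := by gcongr; exact_mod_cast hcount
    _ ≤ ∑ c ∈ C, Fintype.card ι * M.eRk ↑{e ∈ Y | c ∈ L e} := by
        rw [mul_sum]; exact sum_le_sum fun c _ => hclass c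
    _ ≤ Fintype.card ι * (Matroid.sum' fun _ : γ => M).eRk ↑X := by
        rw [← mul_sum]
        gcongr
        simpa [hfiber] using sum_eRk_preimage_le_eRk_sum' (fun _ : γ => M) C X
  rcases eq_or_ne (Fintype.card ι) 0 with h0 | h0
  · have := mul_card_le_mul_eRk_of_covering M V hV a Y hcov
    rw [h0, Nat.cast_zero, zero_mul, nonpos_iff_eq_zero] at this
    simp [mul_assoc, this]
  · exact (ENat.mul_le_mul_left_iff (by exact_mod_cast h0) (ENat.natCast_ne_top _)).mp key

theorem exists_indep_sublists_of_covering {ι γ : Type*} [Fintype ι] (M : Matroid α)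
    (hE : M.E.Finite) (V : ι → Set α) (hV : ∀ i, M.Indep (V i)) (a k : ℕ)
    (hcov : ∀ e ∈ M.E, a ≤ {i | e ∈ V i}.ncard) (L : α → Finset γ)
    (hL : ∀ e ∈ M.E, k * Fintype.card ι ≤ #(L e)) :
    ∃ L' : α → Finset γ, (∀ e ∈ M.E, L' e ⊆ L e ∧ #(L' e) = k * a) ∧
      ∀ c, M.Indep {e ∈ M.E | c ∈ L' e} := by
  classical
  have := hE.to_subtype
  let A : M.E × Fin (k * a) → Finset (γ × α) := fun p => (L p.1).image (·, p.1.1)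
  have hHall : ∀ T : Finset (M.E × Fin (k * a)),
      (#T : ℕ∞) ≤ (Matroid.sum' fun _ : γ => M).eRk ↑(T.biUnion A) := by
    intro T
    set Y := T.image fun p => p.1.1
    have hYE : ∀ e ∈ Y, e ∈ M.E := by
      intro e he
      obtain ⟨p, -, rfl⟩ := mem_image.mp he
      exact p.1.2
    have hTY : #T ≤ k * a * #Y := by
      refine card_le_mul_card_image T _ fun e _ => ?_
      calc #{p ∈ T | p.1.1 = e} ≤ #(univ : Finset (Fin (k * a))) := by
            refine card_le_card_of_injOn Prod.snd (fun _ _ => mem_univ _) ?_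
            intro p hp q hq h
            exact Prod.ext (Subtype.ext ((mem_filter.mp hp).2.trans (mem_filter.mp hq).2.symm)) h
        _ = k * a := by simp
    have hbiUnion : T.biUnion A = Y.biUnion fun e => (L e).image (·, e) := by
      ext ⟨c, e⟩
      simp [A, Y]
    calc (#T : ℕ∞) ≤ k * a * #Y := by exact_mod_cast hTY
      _ ≤ _ := hbiUnion ▸ mul_card_le_eRk_sum'_of_covering M V hV a k L Y
        (fun e he => hcov e (hYE e he)) (fun e he => hL e (hYE e he))
  obtain ⟨f, hfA, hf, hind⟩ := exists_injective_indep_transversal _ A hHall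
  have hfA' : ∀ p, (f p).1 ∈ L p.1 ∧ (f p).2 = p.1.1 := fun p => by
    obtain ⟨c, hc, hcp⟩ := mem_image.mp (hfA p)
    rw [← hcp]
    exact ⟨hc, rfl⟩
  let L' e := if he : e ∈ M.E then univ.image fun t => (f (⟨e, he⟩, t)).1 else ∅
  refine ⟨L', fun e he => ⟨?_, ?_⟩, fun c => ?_⟩
  · simp only [L', dif_pos he, image_subset_iff]
    exact fun t _ => (hfA' _).1
  · simp only [L', dif_pos he]
    rw [card_image_of_injective _ ?_, card_univ, Fintype.card_fin]
    intro t t' h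
    have hsnd : (f (⟨e, he⟩, t)).2 = (f (⟨e, he⟩, t')).2 :=
      (hfA' (⟨e, he⟩, t)).2.trans (hfA' (⟨e, he⟩, t')).2.symm
    exact congrArg Prod.snd (hf (Prod.ext h hsnd))
  · refine (sum'_indep_iff.mp hind c).subset ?_
    rintro e ⟨he, hc⟩
    simp only [L', dif_pos he, mem_image] at hc
    obtain ⟨t, -, rfl⟩ := hc
    exact ⟨(⟨e, he⟩, t), Prod.ext rfl (hfA' _).2⟩

end Matroid

theorem two_a_colors_from_lists_of_covering_general {α : Type*} (M : Matroid α) (hE : M.E.Finite)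
    (a b : ℕ) (V : Fin b → Set α)
    (hIndep : ∀ i, M.Indep (V i)) (hcov : ∀ e ∈ M.E, {i : Fin b | e ∈ V i}.ncard = a)
    (L : α → Finset ℕ) (hL : ∀ e ∈ M.E, (L e).card = 2 * b) :
    ∃ L' : α → Finset ℕ, (∀ e ∈ M.E, L' e ⊆ L e ∧ (L' e).card = 2 * a) ∧
      ∀ i : ℕ, M.Indep {e ∈ M.E | i ∈ L' e} :=
  M.exists_indep_sublists_of_covering hE V hIndep a 2 (fun e he => (hcov e he).ge) L
    (fun e he => by rw [Fintype.card_fin, hL e he])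

/-- If the ground set of a matroid `M` admits an `a`-covering by `b` independent sets,
then from any lists of size `2b` one can choose `2a` colors per element so that each
color class is independent in `M`. -/
theorem two_a_colors_from_lists_of_covering {α : Type*} (M : Matroid α) (hE : M.E.Finite)
    (a b : ℕ) (ha : 0 < a) (hb : 0 < b) (V : Fin b → Set α)
    (hIndep : ∀ i, M.Indep (V i)) (hcov : ∀ e ∈ M.E, {i : Fin b | e ∈ V i}.ncard = a)
    (L : α → Finset ℕ) (hL : ∀ e ∈ M.E, (L e).card = 2 * b) :
    ∃ L' : α → Finset ℕ, (∀ e ∈ M.E, L' e ⊆ L e ∧ (L' e).card = 2 * a) ∧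
      ∀ i : ℕ, M.Indep {e ∈ M.E | i ∈ L' e} :=
  two_a_colors_from_lists_of_covering_general M hE a b V hIndep hcov L hL
end

section
/- Let G be a finite connected simple graph with vertex set V of size n and edge set E(G). For an edge e = {u,v} define ℓ(e) = max(deg(u), deg(v)) + 1, where deg denotes the degree in G. For each integer i ≥ 1 let G_i be the spanning subgraph of G with edge set {e ∈ E(G) : ℓ(e) ≥ i}, and let c(G_i) denote the number of connected components of G_i (counting isolated vertices). Then Σ_{i=1}^{n} (n − c(G_i)) ≥ 2·|E(G)|. -/
/-!
Root `G` at a vertex `r`. In `G_i`, every `v ≠ r` with `deg v + 1 ≥ i` keeps its edge to a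
neighbour closer to `r`; since the vertex of a component of `G_i` closest to `r` is not such a
vertex, there are at most `n - c(G_i)` of them. Summing over `i`, each `v ≠ r` is counted
`deg v + 1` times, and `∑_{v ≠ r} (deg v + 1) = 2|E| + (n - 1 - deg r) ≥ 2|E|`.
-/

/-- The spanning subgraph of `G` whose edges are those edges `{u, v}` of `G` with
`max (deg u) (deg v) + 1 ≥ i`. -/
def degreeLevelSubgraph {V : Type*} [Fintype V] (G : SimpleGraph V) [DecidableRel G.Adj]
    (i : ℕ) : SimpleGraph V where
  Adj u v := G.Adj u v ∧ i ≤ max (G.degree u) (G.degree v) + 1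
  symm := ⟨fun u v ⟨h1, h2⟩ => ⟨h1.symm, by rwa [max_comm]⟩⟩
  loopless := ⟨fun v h => G.loopless.irrefl v h.1⟩

open Finset

namespace SimpleGraph

variable {V : Type*}

lemma card_connectedComponent_add_card_le [Fintype V] {α : Type*} [LinearOrder α]
    (H : SimpleGraph V) (d : V → α) (S : Finset V)
    (hS : ∀ v ∈ S, ∃ w, H.Adj v w ∧ d w < d v) :
    Nat.card H.ConnectedComponent + #S ≤ Fintype.card V := by
  classical
  have hmin : ∀ c : H.ConnectedComponent, ∃ v ∈ c.supp, ∀ w ∈ c.supp, d v ≤ d w := by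
    intro c
    obtain ⟨v, hv, hmin⟩ := Finset.exists_min_image {v | v ∈ c.supp} d
      (by obtain ⟨v, hv⟩ := c.nonempty_supp; exact ⟨v, by simpa using hv⟩)
    exact ⟨v, by simpa using hv, fun w hw => hmin w (by simpa using hw)⟩
  choose f hf hfmin using hmin
  have hf_notMem : ∀ c, f c ∉ S := fun c hc => by
    obtain ⟨w, hadj, hlt⟩ := hS _ hc
    exact (hfmin c w ((c.mem_supp_congr_adj hadj).1 (hf c))).not_gt hlt
  have hinj : Function.Injective fun c => (⟨f c, by simpa using hf_notMem c⟩ : ↥(Sᶜ)) :=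
    fun c₁ c₂ h => by
      have hf_eq : f c₁ = f c₂ := congrArg Subtype.val h
      exact ConnectedComponent.eq_of_common_vertex (hf c₁) (hf_eq ▸ hf c₂)
  have hcard := Nat.card_le_card_of_injective _ hinj
  rw [Nat.card_eq_finsetCard, card_compl] at hcard
  have := S.card_le_univ
  omega

lemma Connected.exists_adj_dist_lt {G : SimpleGraph V} (hG : G.Connected) {v r : V}
    (hv : v ≠ r) : ∃ w, G.Adj v w ∧ G.dist w r < G.dist v r := by
  obtain ⟨p, hp⟩ := hG.exists_walk_length_eq_dist v r
  cases p with
  | nil => exact absurd rfl hv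
  | cons hadj q =>
    refine ⟨_, hadj, ?_⟩
    have := dist_le q
    rw [Walk.length_cons] at hp
    omega

lemma two_mul_card_edgeFinset_le_sum_erase [Fintype V] [DecidableEq V] (G : SimpleGraph V)
    [DecidableRel G.Adj] (r : V) :
    2 * #G.edgeFinset ≤ ∑ v ∈ univ.erase r, (G.degree v + 1) := by
  have hsum := G.sum_degrees_eq_twice_card_edges
  rw [← Finset.add_sum_erase _ _ (mem_univ r)] at hsum
  have hcard : #(univ.erase r) + 1 = Fintype.card V := card_erase_add_one (mem_univ r)
  have := G.degree_lt_card_verts r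
  rw [sum_add_distrib, sum_const, smul_eq_mul, mul_one]
  omega

end SimpleGraph

lemma sum_Icc_card_filter_le_eq_sum {α : Type*} (s : Finset α) (f : α → ℕ) (n : ℕ)
    (hf : ∀ a ∈ s, f a ≤ n) :
    ∑ i ∈ Icc 1 n, #{a ∈ s | i ≤ f a} = ∑ a ∈ s, f a := by
  simp only [card_filter]
  rw [sum_comm]
  refine sum_congr rfl fun a ha => ?_
  rw [← card_filter, show {i ∈ Icc 1 n | i ≤ f a} = Icc 1 (f a) by
    ext i; simp only [mem_filter, mem_Icc]; have := hf a ha; omega]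
  simp

lemma card_filter_add_card_connectedComponent_degreeLevelSubgraph_le {V : Type*} [Fintype V]
    [DecidableEq V] (G : SimpleGraph V) [DecidableRel G.Adj] (hG : G.Connected) (r : V) (i : ℕ) :
    #{v ∈ univ.erase r | i ≤ G.degree v + 1} +
      Nat.card (degreeLevelSubgraph G i).ConnectedComponent ≤ Fintype.card V := by
  rw [add_comm]
  refine SimpleGraph.card_connectedComponent_add_card_le _ (G.dist · r) _ fun v hv => ?_
  rw [mem_filter, mem_erase] at hv
  obtain ⟨w, hadj, hlt⟩ := hG.exists_adj_dist_lt hv.1.1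
  exact ⟨w, ⟨hadj, hv.2.trans (Nat.add_le_add_right (le_max_left _ _) 1)⟩, hlt⟩

/-- For a finite connected graph `G` on `n` vertices, with `G_i` the spanning subgraph
with edge set `{e ∈ E(G) : ℓ(e) ≥ i}` where `ℓ({u,v}) = max (deg u) (deg v) + 1`, one
has `Σ_{i=1}^{n} (n − c(G_i)) ≥ 2 |E(G)|`, where `c` counts connected components. -/
theorem sum_rank_levels_ge_two_mul_edges {V : Type*} [Fintype V] [DecidableEq V]
    (G : SimpleGraph V) [DecidableRel G.Adj] (hG : G.Connected)
    (n : ℕ) (hn : n = Fintype.card V) :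
    2 * G.edgeFinset.card ≤
      ∑ i ∈ Finset.Icc 1 n,
        (n - Nat.card (degreeLevelSubgraph G i).ConnectedComponent) := by
  obtain ⟨r⟩ := hG.nonempty
  have hlevel := card_filter_add_card_connectedComponent_degreeLevelSubgraph_le G hG r
  have hdeg : ∀ v ∈ univ.erase r, G.degree v + 1 ≤ n := fun v _ => by
    have := G.degree_lt_card_verts v
    omega
  calc 2 * #G.edgeFinset ≤ ∑ v ∈ univ.erase r, (G.degree v + 1) :=
        G.two_mul_card_edgeFinset_le_sum_erase r
    _ = ∑ i ∈ Icc 1 n, #{v ∈ univ.erase r | i ≤ G.degree v + 1} :=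
        (sum_Icc_card_filter_le_eq_sum _ _ n hdeg).symm
    _ ≤ _ := sum_le_sum fun i _ => by have := hlevel i; omega
end

section
/- Let G be a finite connected simple graph with vertex set V of size n, and let i ≥ 1 be an integer. Let G_i' be the spanning subgraph of G whose edges are those edges {u,v} of G with max(deg(u), deg(v)) ≥ i, where deg denotes the degree in G, and let c(G_i') denote the number of connected components of G_i' (counting isolated vertices). Then n − c(G_i') + 1 ≥ |{v ∈ V : deg(v) ≥ i}|. -/
/-- The spanning subgraph of `G` whose edges are those edges `{u, v}` of `G` with
`max (deg u) (deg v) ≥ i`. -/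
def degreeLevelSubgraph' {V : Type*} [Fintype V] (G : SimpleGraph V) [DecidableRel G.Adj]
    (i : ℕ) : SimpleGraph V where
  Adj u v := G.Adj u v ∧ i ≤ max (G.degree u) (G.degree v)
  symm := ⟨fun u v ⟨h1, h2⟩ => ⟨h1.symm, by rwa [max_comm]⟩⟩
  loopless := ⟨fun v h => G.loopless.irrefl v h.1⟩

/-!
If some component of `G_i'` consists of high-degree vertices only, every edge of `G` leaving it
lies in `G_i'`, so by connectivity of `G` it is the only component and the bound reduces to `|{v : deg v ≥ i}| ≤ n`.
Otherwise every component contains a vertex of degree `< i`, so `c(G_i')` is at most the number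
`n - |{v : deg v ≥ i}|` of such vertices.
-/

namespace SimpleGraph

variable {V : Type*} {G H : SimpleGraph V}

theorem ConnectedComponent.connectedComponentMk_eq_of_adj_closed (hG : G.Preconnected)
    (C : H.ConnectedComponent)
    (hC : ∀ u v, G.Adj u v → H.connectedComponentMk u = C → H.Adj u v) (v : V) :
    H.connectedComponentMk v = C := by
  obtain ⟨u, rfl⟩ := C.exists_rep
  obtain ⟨w⟩ := hG u v
  suffices ∀ a b, G.Walk a b → H.connectedComponentMk a = H.connectedComponentMk u →
      H.connectedComponentMk b = H.connectedComponentMk u from this u v w rfl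
  intro a b w
  induction w with
  | nil => exact id
  | cons hab _ ih =>
    intro ha
    exact ih ((ConnectedComponent.sound (hC _ _ hab ha).reachable).symm.trans ha)

theorem subsingleton_connectedComponent_of_adj_closed (hG : G.Preconnected)
    (C : H.ConnectedComponent)
    (hC : ∀ u v, G.Adj u v → H.connectedComponentMk u = C → H.Adj u v) :
    Subsingleton H.ConnectedComponent :=
  ⟨fun C₁ C₂ => C₁.ind fun v₁ => C₂.ind fun v₂ => by
    rw [C.connectedComponentMk_eq_of_adj_closed hG hC v₁,
      C.connectedComponentMk_eq_of_adj_closed hG hC v₂]⟩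

theorem card_connectedComponent_le_card_of_forall_exists_mem (s : Finset V)
    (hs : ∀ C : H.ConnectedComponent, ∃ v ∈ s, H.connectedComponentMk v = C) :
    Nat.card H.ConnectedComponent ≤ s.card := by
  rw [← Nat.card_eq_finsetCard]
  refine Nat.card_le_card_of_surjective (fun v : s => H.connectedComponentMk v) fun C => ?_
  obtain ⟨v, hv, rfl⟩ := hs C
  exact ⟨⟨v, hv⟩, rfl⟩

end SimpleGraph

theorem degreeLevelSubgraph'_adj_of_le_degree {V : Type*} [Fintype V] {G : SimpleGraph V}
    [DecidableRel G.Adj] {i : ℕ} {u v : V} (huv : G.Adj u v) (hu : i ≤ G.degree u) :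
    (degreeLevelSubgraph' G i).Adj u v :=
  ⟨huv, le_max_of_le_left hu⟩

theorem rank_level_ge_high_degree_count_general {V : Type*} [Fintype V]
    (G : SimpleGraph V) [DecidableRel G.Adj] (hG : G.Connected)
    (n : ℕ) (hn : n = Fintype.card V) (i : ℕ) :
    (Finset.univ.filter fun v => i ≤ G.degree v).card ≤
      n - Nat.card (degreeLevelSubgraph' G i).ConnectedComponent + 1 := by
  set H := degreeLevelSubgraph' G i
  have hhigh : (Finset.univ.filter fun v => i ≤ G.degree v).card ≤ n :=
    hn ▸ Finset.card_filter_le _ _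
  by_cases hcomp : ∃ C : H.ConnectedComponent, ∀ v, H.connectedComponentMk v = C → i ≤ G.degree v
  · obtain ⟨C, hC⟩ := hcomp
    have : Subsingleton H.ConnectedComponent :=
      SimpleGraph.subsingleton_connectedComponent_of_adj_closed hG.preconnected C
        fun u v huv hu => degreeLevelSubgraph'_adj_of_le_degree huv (hC u hu)
    have := Finite.card_le_one_iff_subsingleton.2 this
    omega
  · push Not at hcomp
    have hlow := SimpleGraph.card_connectedComponent_le_card_of_forall_exists_mem
      (H := H) (Finset.univ.filter fun v => ¬ i ≤ G.degree v) (by simpa [and_comm] using hcomp)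
    have hsplit := Finset.card_filter_add_card_filter_not (s := Finset.univ)
      (p := fun v => i ≤ G.degree v)
    rw [Finset.card_univ, ← hn] at hsplit
    omega

/-- For a finite connected graph `G` on `n` vertices and `i ≥ 1`, with `G_i'` the
spanning subgraph whose edges are the edges `{u,v}` of `G` with
`max (deg u) (deg v) ≥ i`, one has `n − c(G_i') + 1 ≥ |{v : deg v ≥ i}|`,
where `c` counts connected components (including isolated vertices). -/
theorem rank_level_ge_high_degree_count {V : Type*} [Fintype V] [DecidableEq V]
    (G : SimpleGraph V) [DecidableRel G.Adj] (hG : G.Connected)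
    (n : ℕ) (hn : n = Fintype.card V) (i : ℕ) (hi : 1 ≤ i) :
    (Finset.univ.filter fun v => i ≤ G.degree v).card ≤
      n - Nat.card (degreeLevelSubgraph' G i).ConnectedComponent + 1 :=
  rank_level_ge_high_degree_count_general G hG n hn i
end
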